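/- arXiv:2408.10697 — 5 statements merged into one kernel-verified Lean document; each statement's English description precedes it below -/
import Mathlib

section
/- Let $1 \le N \le n$, $1 < p < \infty$, and write $x = (x', x'') \in \mathbb{R}^N \times \mathbb{R}^{n-N}$. For any smooth compactly supported complex-valued function $f$ on $\mathbb{R}^n \setminus \{x' = 0\}$, we have $\left(\int_{\mathbb{R}^n} \frac{|f(x)|^p}{|x'|^N} dx\right)^{1/p} \le p \left(\int_{\mathbb{R}^n} \frac{|\log|x'| \, (x' \cdot \nabla_N f(x))|^p}{|x'|^N} dx\right)^{1/p}$, where $|x'|$ is the Euclidean norm on $\mathbb{R}^N$ and $\nabla_N$ is the gradient in the first $N$ variables. -/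
open MeasureTheory Finset

noncomputable def pnorm (N n : ℕ) (x : Fin n → ℝ) : ℝ :=
  Real.sqrt (∑ j : Fin n, if (j : ℕ) < N then (x j) ^ 2 else 0)

noncomputable def eul (N n : ℕ) (f : (Fin n → ℝ) → ℂ) : (Fin n → ℝ) → ℂ :=
  fun x => ∑ j : Fin n, if (j : ℕ) < N then (x j : ℂ) * fderiv ℝ f x (Pi.single j 1) else 0

section Aux

open RealInnerProductSpace

variable {n N : ℕ} {p : ℝ} {f : (Fin n → ℝ) → ℂ}

/-- The derivative of the squared partial norm. -/
noncomputable def DQc (N n : ℕ) (x : Fin n → ℝ) : (Fin n → ℝ) →L[ℝ] ℝ :=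
  ∑ j : Fin n, if (j : ℕ) < N then (2 * x j) • ContinuousLinearMap.proj j else 0

/-- Scalar radial derivative factor. -/
noncomputable def drr (N n : ℕ) (j : Fin n) (x : Fin n → ℝ) : ℝ :=
  (1 / (2 * pnorm N n x)) * (if (j : ℕ) < N then 2 * x j else 0)

/-- The `j`-th summand of the divergence of `‖f‖^p · log|x'| · x' / |x'|^N`. -/
noncomputable def Dj (N n : ℕ) (p : ℝ) (f : (Fin n → ℝ) → ℂ) (j : Fin n)
    (x : Fin n → ℝ) : ℝ :=
  ‖f x‖ ^ p *
      ((Real.log (pnorm N n x) * x j) *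
          (-(N : ℝ) * pnorm N n x ^ (-(N : ℝ) - 1) * drr N n j x)
        + pnorm N n x ^ (-(N : ℝ)) *
          (Real.log (pnorm N n x) + x j * ((pnorm N n x)⁻¹ * drr N n j x)))
    + (Real.log (pnorm N n x) * x j * pnorm N n x ^ (-(N : ℝ))) *
        (p * ‖f x‖ ^ (p - 2) * ⟪f x, fderiv ℝ f x (Pi.single j 1)⟫)

/-- The vector field component `uⱼ = ‖f‖^p · log|x'| · xⱼ / |x'|^N`. -/
noncomputable def uj (N n : ℕ) (p : ℝ) (f : (Fin n → ℝ) → ℂ) (j : Fin n)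
    (x : Fin n → ℝ) : ℝ :=
  ‖f x‖ ^ p * (Real.log (pnorm N n x) * x j * pnorm N n x ^ (-(N : ℝ)))

lemma sum_sq_nonneg (x : Fin n → ℝ) :
    0 ≤ ∑ j : Fin n, if (j : ℕ) < N then (x j) ^ 2 else 0 :=
  Finset.sum_nonneg fun j _ => by positivity

lemma pnorm_nonneg (x : Fin n → ℝ) : 0 ≤ pnorm N n x := Real.sqrt_nonneg _

lemma pnorm_sq (x : Fin n → ℝ) :
    pnorm N n x ^ 2 = ∑ j : Fin n, if (j : ℕ) < N then (x j) ^ 2 else 0 :=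
  Real.sq_sqrt (sum_sq_nonneg x)

lemma continuous_pnorm : Continuous (pnorm N n) := by
  apply Real.continuous_sqrt.comp
  apply continuous_finset_sum
  intro j _
  by_cases hj : (j : ℕ) < N <;> simp only [hj, if_true, if_false] <;> fun_prop

lemma hasFDerivAt_sumsq (x : Fin n → ℝ) :
    HasFDerivAt (fun y : Fin n → ℝ => ∑ j : Fin n, if (j : ℕ) < N then (y j) ^ 2 else 0)
      (DQc N n x) x := by
  apply HasFDerivAt.fun_sum
  intro j _
  by_cases hj : (j : ℕ) < N
  · simp only [hj, if_true]
    have h1 : HasFDerivAt (fun y : Fin n → ℝ => y j)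
        (ContinuousLinearMap.proj (R := ℝ) (φ := fun _ : Fin n => ℝ) j) x :=
      (ContinuousLinearMap.proj (R := ℝ) (φ := fun _ : Fin n => ℝ) j).hasFDerivAt
    have h2 := h1.fun_mul h1
    have h3 : x j • (ContinuousLinearMap.proj (R := ℝ) (φ := fun _ : Fin n => ℝ) j)
        + x j • ContinuousLinearMap.proj j
        = (2 * x j) • ContinuousLinearMap.proj j := by
      rw [two_mul, add_smul]
    rw [← h3]
    simpa only [pow_two] using h2
  · simp only [hj, if_false]
    exact hasFDerivAt_const 0 x

lemma DQc_apply (x : Fin n → ℝ) (j : Fin n) :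
    DQc N n x (Pi.single j 1) = if (j : ℕ) < N then 2 * x j else 0 := by
  rw [DQc, ContinuousLinearMap.sum_apply]
  rw [Finset.sum_eq_single j]
  · by_cases hj : (j : ℕ) < N <;> simp [hj, Pi.single_apply]
  · intro k _ hk
    by_cases hk' : (k : ℕ) < N <;> simp [hk', Pi.single_apply, hk]
  · simp

lemma hasFDerivAt_pnorm {x : Fin n → ℝ} (hx : pnorm N n x ≠ 0) :
    HasFDerivAt (pnorm N n) ((1 / (2 * pnorm N n x)) • DQc N n x) x := by
  have hQx : (∑ j : Fin n, if (j : ℕ) < N then (x j) ^ 2 else 0) ≠ 0 := by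
    intro h
    apply hx
    simp [pnorm, h]
  have h := (Real.hasDerivAt_sqrt hQx).comp_hasFDerivAt x (hasFDerivAt_sumsq x)
  exact h

lemma normpow_mul_norm (hp : 1 < p) (z : ℂ) : ‖z‖ ^ (p - 2) * ‖z‖ = ‖z‖ ^ (p - 1) := by
  rcases eq_or_ne z 0 with rfl | hz
  · simp [Real.zero_rpow (show p - 1 ≠ 0 from sub_ne_zero.2 hp.ne')]
  · rw [← Real.rpow_add_one (norm_ne_zero_iff.mpr hz)]
    ring_nf

lemma card_filter_lt (hNn : N ≤ n) :
    ∑ j : Fin n, (if (j : ℕ) < N then (1 : ℝ) else 0) = N := by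
  rw [Finset.sum_boole]
  congr 1
  have he : (Finset.univ.filter fun j : Fin n => (j : ℕ) < N)
      = Finset.univ.image (Fin.castLE hNn) := by
    ext k
    simp only [Finset.mem_filter, Finset.mem_univ, true_and, Finset.mem_image]
    constructor
    · intro h
      exact ⟨⟨(k : ℕ), h⟩, by ext; rfl⟩
    · rintro ⟨i, rfl⟩
      exact i.isLt
  rw [he, Finset.card_image_of_injective _ (Fin.castLE_injective hNn),
    Finset.card_univ, Fintype.card_fin]

end Aux

set_option maxHeartbeats 1000000 in
open RealInnerProductSpace in
/-- Critical $L^p$-Sobolev type inequality with cylindrical weight. -/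
theorem stmt0 (n N : ℕ) (p : ℝ) (hN1 : 1 ≤ N) (hNn : N ≤ n) (hp : 1 < p)
    (f : (Fin n → ℝ) → ℂ) (hf : ContDiff ℝ (⊤ : ℕ∞) f) (hcs : HasCompactSupport f)
    (hsupp : tsupport f ⊆ {x | pnorm N n x ≠ 0}) :
    (∫ x : Fin n → ℝ, ‖f x‖ ^ p / (pnorm N n x) ^ (N : ℝ)) ^ (1 / p) ≤
      p * (∫ x : Fin n → ℝ,
        ‖(Real.log (pnorm N n x) : ℂ) * eul N n f x‖ ^ p / (pnorm N n x) ^ (N : ℝ)) ^ (1 / p) := by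
  classical
  have hp0 : (0 : ℝ) < p := lt_trans one_pos hp
  have hpne : p ≠ 0 := hp0.ne'
  have hp1 : p - 1 ≠ 0 := sub_ne_zero.2 hp.ne'
  have hN0 : (0 : ℝ) < (N : ℝ) := by exact_mod_cast hN1
  have hNne : -(N : ℝ) ≠ 0 := by linarith
  set q : ℝ := p / (p - 1) with hqdef
  have hpq : p.HolderConjugate q := by
    have := Real.HolderConjugate.conjExponent hp
    rwa [Real.conjExponent] at this
  have hq0 : 0 < q := hpq.symm.pos
  -- trivial case : f = 0
  by_cases hK : tsupport f = ∅
  · have hf0 : f = fun _ => 0 := by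
      funext x
      exact image_eq_zero_of_notMem_tsupport (by simp [hK])
    subst hf0
    have he : eul N n (fun _ => (0 : ℂ)) = fun _ => 0 := by
      funext x
      simp [eul]
    rw [he]
    simp only [norm_zero, Real.zero_rpow hpne, mul_zero, zero_div, norm_zero]
    rw [integral_zero, Real.zero_rpow (one_div_ne_zero hpne)]
    positivity
  -- setup
  have hrc : Continuous (pnorm N n) := continuous_pnorm
  have hKne : (tsupport f).Nonempty := Set.nonempty_iff_ne_empty.2 hK
  obtain ⟨x₀, hx₀K, hmin⟩ := hcs.exists_isMinOn hKne hrc.continuousOn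
  set ε : ℝ := pnorm N n x₀ with hεdef
  have hε : 0 < ε := lt_of_le_of_ne (pnorm_nonneg x₀) (Ne.symm (hsupp hx₀K))
  have hout : ∀ y, pnorm N n y < ε → y ∉ tsupport f := by
    intro y hy hyK
    exact absurd (hmin hyK) (not_le.2 hy)
  have hfz : ∀ y, y ∉ tsupport f → f y = 0 := fun y hy => image_eq_zero_of_notMem_tsupport hy
  -- master integrability lemma
  have master : ∀ h : (Fin n → ℝ) → ℝ, (∀ x, pnorm N n x ≠ 0 → ContinuousAt h x) →
      (∀ x, x ∉ tsupport f → h x = 0) →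
      Continuous h ∧ HasCompactSupport h ∧ Integrable h volume := by
    intro h hc hv
    have hcont : Continuous h := by
      rw [continuous_iff_continuousAt]
      intro x
      by_cases hx : pnorm N n x ≠ 0
      · exact hc x hx
      · push_neg at hx
        have hU : {y | pnorm N n y < ε} ∈ nhds x :=
          (isOpen_lt hrc continuous_const).mem_nhds (by simp [hx, hε])
        have heq : h =ᶠ[nhds x] fun _ => (0 : ℝ) :=
          Filter.eventuallyEq_of_mem hU fun y hy => hv y (hout y hy)
        exact heq.continuousAt
    have hhcs : HasCompactSupport h := HasCompactSupport.intro hcs fun x hx => hv x hx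
    exact ⟨hcont, hhcs, hcont.integrable_of_hasCompactSupport hhcs⟩
  -- continuity helpers
  have hfc : Continuous f := hf.continuous
  have hfderc : Continuous fun x => fderiv ℝ f x := hf.continuous_fderiv (by simp)
  have hnormp : ∀ c : ℝ, 0 ≤ c → Continuous fun x => ‖f x‖ ^ c := fun c hc =>
    hfc.norm.rpow_const fun x => Or.inr hc
  have heulc : Continuous (eul N n f) := by
    apply continuous_finset_sum
    intro j _
    by_cases hj : (j : ℕ) < N
    · simp only [hj, if_true]
      exact (Complex.continuous_ofReal.comp (continuous_apply j)).mul
        (hfderc.clm_apply continuous_const)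
    · simp only [hj, if_false]
      exact continuous_const
  have hlogca : ∀ x : Fin n → ℝ, pnorm N n x ≠ 0 →
      ContinuousAt (fun y => Real.log (pnorm N n y)) x := fun x hx =>
    (Real.continuousAt_log hx).comp hrc.continuousAt
  have hrpowca : ∀ (c : ℝ) (x : Fin n → ℝ), pnorm N n x ≠ 0 →
      ContinuousAt (fun y => pnorm N n y ^ c) x := fun c x hx =>
    hrc.continuousAt.rpow_const (Or.inl hx)
  have heulz : ∀ x, x ∉ tsupport f → eul N n f x = 0 := by
    intro x hx
    have hU : (tsupport f)ᶜ ∈ nhds x := (isClosed_tsupport f).isOpen_compl.mem_nhds hx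
    have hfe : f =ᶠ[nhds x] fun _ => (0 : ℂ) :=
      Filter.eventuallyEq_of_mem hU fun y hy => hfz y hy
    have hfd : fderiv ℝ f x = 0 := by
      rw [hfe.fderiv_eq]
      exact fderiv_const_apply 0
    simp [eul, hfd]
  -- key: pointwise line derivative of uⱼ is Dⱼ
  have hDuj : ∀ (j : Fin n) (x : Fin n → ℝ),
      HasLineDerivAt ℝ (uj N n p f j) (Dj N n p f j x) x (Pi.single j 1) := by
    intro j x
    by_cases hx : pnorm N n x = 0
    · -- locally zero
      have hU : {y | pnorm N n y < ε} ∈ nhds x :=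
        (isOpen_lt hrc continuous_const).mem_nhds (by simp [hx, hε])
      have h0 : uj N n p f j =ᶠ[nhds x] fun _ => (0 : ℝ) :=
        Filter.eventuallyEq_of_mem hU fun y hy => by
          simp [uj, hfz y (hout y hy), Real.zero_rpow hpne]
      have hF : HasFDerivAt (uj N n p f j) (0 : (Fin n → ℝ) →L[ℝ] ℝ) x :=
        (hasFDerivAt_const 0 x).congr_of_eventuallyEq h0
      have hl := hF.hasLineDerivAt (Pi.single j 1)
      have hD0 : Dj N n p f j x = 0 := by
        simp [Dj, drr, hx, Real.zero_rpow hNne, Real.zero_rpow (show -(N:ℝ) - 1 ≠ 0 by linarith)]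
      rw [hD0]
      simpa using hl
    · -- product rule
      have hGd : HasFDerivAt (fun y => ‖f y‖ ^ p)
          ((p * ‖f x‖ ^ (p - 2)) • (innerSL ℝ (f x)).comp (fderiv ℝ f x)) x := by
        have h1 := hasFDerivAt_norm_rpow (f x) hp
        have h2 := (hf.differentiable (by simp) x).hasFDerivAt
        have h3 := h1.comp x h2
        simpa [ContinuousLinearMap.smul_comp, Function.comp_def] using h3
      have hrd := hasFDerivAt_pnorm (N := N) (n := n) hx
      have hlogd : HasFDerivAt (fun y => Real.log (pnorm N n y))
          ((pnorm N n x)⁻¹ • ((1 / (2 * pnorm N n x)) • DQc N n x)) x :=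
        (Real.hasDerivAt_log hx).comp_hasFDerivAt x hrd
      have hxj : HasFDerivAt (fun y : Fin n → ℝ => y j)
          (ContinuousLinearMap.proj (R := ℝ) (φ := fun _ : Fin n => ℝ) j) x :=
        (ContinuousLinearMap.proj (R := ℝ) (φ := fun _ : Fin n => ℝ) j).hasFDerivAt
      have hpowd : HasFDerivAt (fun y => pnorm N n y ^ (-(N : ℝ)))
          ((-(N : ℝ) * pnorm N n x ^ (-(N : ℝ) - 1)) • ((1 / (2 * pnorm N n x)) • DQc N n x)) x :=
        (Real.hasDerivAt_rpow_const (Or.inl hx)).comp_hasFDerivAt x hrd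
      have hud := hGd.fun_mul ((hlogd.fun_mul hxj).fun_mul hpowd)
      have hl : HasLineDerivAt ℝ (uj N n p f j) _ x (Pi.single j 1) := hud.hasLineDerivAt (Pi.single j 1)
      convert hl using 1
      simp only [ContinuousLinearMap.add_apply, ContinuousLinearMap.smul_apply,
          ContinuousLinearMap.coe_comp', Function.comp_apply, smul_eq_mul,
        innerSL_apply_apply, DQc_apply, ContinuousLinearMap.proj_apply, Pi.single_eq_same]
      simp only [Dj, drr]
      ring
  -- measurability helpers
  have mea_rpow_comp : ∀ g : (Fin n → ℝ) → ℝ, Measurable g → (∀ x, 0 ≤ g x) →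
      ∀ c : ℝ, Measurable fun x => g x ^ c := by
    intro g hg hg0 c
    have he : (fun x => g x ^ c) = fun x =>
        if g x = 0 then (if c = 0 then 1 else 0) else Real.exp (Real.log (g x) * c) := by
      funext x
      rcases eq_or_ne (g x) 0 with h | h
      · rw [h]
        rcases eq_or_ne c 0 with rfl | hc
        · simp
        · simp [Real.zero_rpow hc, hc]
      · rw [if_neg h, Real.rpow_def_of_pos (lt_of_le_of_ne (hg0 x) (Ne.symm h))]
    rw [he]
    exact Measurable.ite (hg (measurableSet_singleton 0)) measurable_const
      (Real.measurable_exp.comp ((Real.measurable_log.comp hg).mul measurable_const))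
  have mea_r : Measurable (pnorm N n) := hrc.measurable
  have mea_log : Measurable fun x => Real.log (pnorm N n x) := Real.measurable_log.comp mea_r
  have mea_rp : ∀ c : ℝ, Measurable fun x => pnorm N n x ^ c :=
    mea_rpow_comp _ mea_r pnorm_nonneg
  have mea_nf : ∀ c : ℝ, Measurable fun x => ‖f x‖ ^ c :=
    mea_rpow_comp _ hfc.norm.measurable fun x => norm_nonneg _
  have cont_inner : ∀ j : Fin n,
      Continuous fun x => (⟪f x, fderiv ℝ f x (Pi.single j 1)⟫ : ℝ) := fun j =>
    hfc.inner (hfderc.clm_apply continuous_const)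
  have mea_drr : ∀ j : Fin n, Measurable (drr N n j) := by
    intro j
    unfold drr
    by_cases hj : (j : ℕ) < N
    · simp only [hj, if_true]
      exact (measurable_const.div (measurable_const.mul mea_r)).mul
        (measurable_const.mul (measurable_pi_apply j))
    · simp only [hj, if_false, mul_zero]
      exact measurable_const
  have mea_Dj : ∀ j : Fin n, Measurable (Dj N n p f j) := by
    intro j
    unfold Dj
    apply Measurable.add
    · exact (mea_nf p).mul
        ((((mea_log.mul (measurable_pi_apply j))).mul
            ((measurable_const.mul (mea_rp (-(N : ℝ) - 1))).mul (mea_drr j))).add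
          ((mea_rp (-(N : ℝ))).mul
            (mea_log.add ((measurable_pi_apply j).mul (mea_r.inv.mul (mea_drr j))))))
    · exact ((mea_log.mul (measurable_pi_apply j)).mul (mea_rp (-(N : ℝ)))).mul
        ((measurable_const.mul (mea_nf (p - 2))).mul (cont_inner j).measurable)
  -- integrability of uⱼ
  have hujint : ∀ j : Fin n, Integrable (uj N n p f j) volume := by
    intro j
    refine (master _ ?_ ?_).2.2
    · intro x hx
      exact ((hnormp p hp0.le).continuousAt).mul
        (((hlogca x hx).mul (continuous_apply j).continuousAt).mul (hrpowca _ x hx))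
    · intro x hx
      simp [uj, hfz x hx, Real.zero_rpow hpne]
  have hdrrca : ∀ (j : Fin n) (x : Fin n → ℝ), pnorm N n x ≠ 0 →
      ContinuousAt (drr N n j) x := by
    intro j x hx
    unfold drr
    apply ContinuousAt.mul
    · exact ContinuousAt.div continuousAt_const ((continuous_const.mul hrc).continuousAt)
        (by simp [hx])
    · by_cases hj : (j : ℕ) < N
      · simp only [hj, if_true]
        exact (continuous_const.mul (continuous_apply j)).continuousAt
      · simp only [hj, if_false]
        exact continuousAt_const
  -- integrability of Dⱼ (via a continuous dominating function)
  have hDjint : ∀ j : Fin n, Integrable (Dj N n p f j) volume := by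
    intro j
    have hMint : Integrable (fun x =>
        ‖f x‖ ^ p * |(Real.log (pnorm N n x) * x j) *
            (-(N : ℝ) * pnorm N n x ^ (-(N : ℝ) - 1) * drr N n j x)
          + pnorm N n x ^ (-(N : ℝ)) *
            (Real.log (pnorm N n x) + x j * ((pnorm N n x)⁻¹ * drr N n j x))|
        + |Real.log (pnorm N n x) * x j * pnorm N n x ^ (-(N : ℝ))| *
            (p * ‖f x‖ ^ (p - 1) * ‖fderiv ℝ f x (Pi.single j 1)‖)) volume := by
      refine (master _ ?_ ?_).2.2
      · intro x hx
        have c1 : ContinuousAt (fun y : Fin n → ℝ => y j) x := (continuous_apply j).continuousAt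
        have c2 := hlogca x hx
        have c3 := hdrrca j x hx
        have c4 : ContinuousAt (fun y => (pnorm N n y)⁻¹) x := hrc.continuousAt.inv₀ hx
        have c5 : ContinuousAt (fun y => p * ‖f y‖ ^ (p - 1) * ‖fderiv ℝ f y (Pi.single j 1)‖) x :=
          ((continuous_const.mul (hnormp (p - 1) (by linarith))).mul
            ((hfderc.clm_apply continuous_const).norm)).continuousAt
        refine ContinuousAt.add (ContinuousAt.mul (hnormp p hp0.le).continuousAt
          (ContinuousAt.abs ?_)) (ContinuousAt.mul (ContinuousAt.abs ?_) c5)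
        · exact ((c2.mul c1).mul ((continuousAt_const.mul (hrpowca _ x hx)).mul c3)).add
            ((hrpowca _ x hx).mul (c2.add (c1.mul (c4.mul c3))))
        · exact (c2.mul c1).mul (hrpowca _ x hx)
      · intro x hx
        simp [hfz x hx, Real.zero_rpow hpne, Real.zero_rpow hp1]
    refine hMint.mono' (mea_Dj j).aestronglyMeasurable
      (Filter.Eventually.of_forall fun x => ?_)
    rw [Real.norm_eq_abs]
    have habs2 : |p * ‖f x‖ ^ (p - 2) * ⟪f x, fderiv ℝ f x (Pi.single j 1)⟫|
        ≤ p * ‖f x‖ ^ (p - 1) * ‖fderiv ℝ f x (Pi.single j 1)‖ := by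
      rw [abs_mul, abs_mul, abs_of_nonneg hp0.le,
        abs_of_nonneg (Real.rpow_nonneg (norm_nonneg _) _)]
      calc p * ‖f x‖ ^ (p - 2) * |⟪f x, fderiv ℝ f x (Pi.single j 1)⟫|
          ≤ p * ‖f x‖ ^ (p - 2) * (‖f x‖ * ‖fderiv ℝ f x (Pi.single j 1)‖) := by
            gcongr
            exact abs_real_inner_le_norm _ _
        _ = p * ‖f x‖ ^ (p - 1) * ‖fderiv ℝ f x (Pi.single j 1)‖ := by
            rw [← normpow_mul_norm hp (f x)]
            ring
    unfold Dj
    refine (abs_add_le _ _).trans (add_le_add ?_ ?_)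
    · rw [abs_mul, abs_of_nonneg (Real.rpow_nonneg (norm_nonneg _) _)]
    · rw [abs_mul]
      exact mul_le_mul_of_nonneg_left habs2 (abs_nonneg _)
  -- integration by parts : each divergence summand integrates to zero
  have ibp : ∀ j : Fin n, ∫ x : Fin n → ℝ, Dj N n p f j x = 0 := by
    intro j
    have hone : ∀ x : Fin n → ℝ, HasLineDerivAt ℝ (fun _ : Fin n → ℝ => (1 : ℝ))
        ((fun _ : Fin n → ℝ => (0 : ℝ)) x) x (Pi.single j 1) := fun x => by
      simpa using (hasFDerivAt_const (1 : ℝ) x).hasLineDerivAt (Pi.single j 1)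
    have h := integral_bilinear_hasLineDerivAt_right_eq_neg_left_of_integrable
      (μ := (volume : Measure (Fin n → ℝ))) (B := ContinuousLinearMap.mul ℝ ℝ)
      (f := fun _ => (1 : ℝ)) (f' := fun _ => (0 : ℝ)) (g := uj N n p f j)
      (g' := Dj N n p f j) (v := Pi.single j 1) ?_ ?_ ?_ (fun x _ => hone x) (fun x _ => hDuj j x)
    · simpa using h
    · simpa using (integrable_zero (Fin n → ℝ) ℝ (volume : Measure (Fin n → ℝ)))
    · simpa using hDjint j
    · simpa using hujint j
  -- the divergence sum identity
  have hSsum : ∀ x : Fin n → ℝ,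
      (∑ j : Fin n, if (j : ℕ) < N then Dj N n p f j x else 0)
        = ‖f x‖ ^ p * pnorm N n x ^ (-(N : ℝ))
          + Real.log (pnorm N n x) * pnorm N n x ^ (-(N : ℝ)) *
              (p * ‖f x‖ ^ (p - 2) * ⟪f x, eul N n f x⟫) := by
    intro x
    by_cases hx : pnorm N n x = 0
    · have hz : ∀ j : Fin n, Dj N n p f j x = 0 := by
        intro j
        simp [Dj, drr, hx, Real.zero_rpow hNne,
          Real.zero_rpow (show -(N : ℝ) - 1 ≠ 0 by linarith)]
      simp [hz, hx, Real.zero_rpow hNne]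
    · have hxp : 0 < pnorm N n x := lt_of_le_of_ne (pnorm_nonneg x) (Ne.symm hx)
      have hterm : ∀ j : Fin n, (if (j : ℕ) < N then Dj N n p f j x else 0)
          = (‖f x‖ ^ p * (Real.log (pnorm N n x) * (-(N : ℝ)) * pnorm N n x ^ (-(N : ℝ) - 1) *
                (pnorm N n x)⁻¹
              + pnorm N n x ^ (-(N : ℝ)) * ((pnorm N n x)⁻¹ * (pnorm N n x)⁻¹)))
              * (if (j : ℕ) < N then (x j) ^ 2 else 0)
            + (‖f x‖ ^ p * (pnorm N n x ^ (-(N : ℝ)) * Real.log (pnorm N n x)))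
              * (if (j : ℕ) < N then (1 : ℝ) else 0)
            + (Real.log (pnorm N n x) * pnorm N n x ^ (-(N : ℝ)) * (p * ‖f x‖ ^ (p - 2)))
              * (if (j : ℕ) < N then x j * ⟪f x, fderiv ℝ f x (Pi.single j 1)⟫ else 0) := by
        intro j
        by_cases hj : (j : ℕ) < N
        · simp only [Dj, drr, hj, if_true]
          field_simp
          ring
        · simp [hj]
      rw [Finset.sum_congr rfl fun j _ => hterm j]
      rw [Finset.sum_add_distrib, Finset.sum_add_distrib, ← Finset.mul_sum, ← Finset.mul_sum,
        ← Finset.mul_sum]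
      rw [← pnorm_sq x, card_filter_lt hNn]
      have hS3 : (∑ j : Fin n, if (j : ℕ) < N then
          x j * ⟪f x, fderiv ℝ f x (Pi.single j 1)⟫ else 0) = ⟪f x, eul N n f x⟫ := by
        rw [show eul N n f x = ∑ j : Fin n,
          (if (j : ℕ) < N then (x j : ℂ) * fderiv ℝ f x (Pi.single j 1) else 0) from rfl]
        rw [inner_sum]
        apply Finset.sum_congr rfl
        intro j _
        by_cases hj : (j : ℕ) < N
        · simp only [hj, if_true]
          rw [← Complex.real_smul, real_inner_smul_right]
        · simp [hj]
      rw [hS3]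
      have e1 : pnorm N n x ^ (-(N : ℝ)) = pnorm N n x ^ (-(N : ℝ) - 1) * pnorm N n x := by
        rw [← Real.rpow_add_one hx (-(N : ℝ) - 1)]
        ring_nf
      rw [e1]
      field_simp
      ring
  -- integrability of the two pieces
  have hI1int : Integrable (fun x => ‖f x‖ ^ p * pnorm N n x ^ (-(N : ℝ))) volume := by
    refine (master _ ?_ ?_).2.2
    · intro x hx
      exact (hnormp p hp0.le).continuousAt.mul (hrpowca _ x hx)
    · intro x hx
      simp [hfz x hx, Real.zero_rpow hpne]
  have cont_ieul : Continuous fun x => (⟪f x, eul N n f x⟫ : ℝ) := hfc.inner heulc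
  have mea_I2 : Measurable (fun x => Real.log (pnorm N n x) * pnorm N n x ^ (-(N : ℝ)) *
      (p * ‖f x‖ ^ (p - 2) * ⟪f x, eul N n f x⟫)) :=
    (mea_log.mul (mea_rp _)).mul
      ((measurable_const.mul (mea_nf (p - 2))).mul cont_ieul.measurable)
  -- the dominating product p · A · B
  have hABint : Integrable (fun x => p *
      ((‖(Real.log (pnorm N n x) : ℂ) * eul N n f x‖ * pnorm N n x ^ (-(N : ℝ) / p)) *
        (‖f x‖ ^ (p - 1) * pnorm N n x ^ (-(N : ℝ) / q)))) volume := by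
    refine (master _ ?_ ?_).2.2
    · intro x hx
      have cA : ContinuousAt (fun y =>
          ‖(Real.log (pnorm N n y) : ℂ) * eul N n f y‖ * pnorm N n y ^ (-(N : ℝ) / p)) x :=
        (((Complex.continuous_ofReal.continuousAt.comp (hlogca x hx)).mul
          heulc.continuousAt).norm).mul (hrpowca _ x hx)
      have cB : ContinuousAt (fun y => ‖f y‖ ^ (p - 1) * pnorm N n y ^ (-(N : ℝ) / q)) x :=
        (hnormp (p - 1) (by linarith)).continuousAt.mul (hrpowca _ x hx)
      exact continuousAt_const.mul (cA.mul cB)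
    · intro x hx
      simp [hfz x hx, Real.zero_rpow hp1]
  -- pointwise bound |I2| ≤ p·A·B
  have hI2bd : ∀ x : Fin n → ℝ,
      |Real.log (pnorm N n x) * pnorm N n x ^ (-(N : ℝ)) *
          (p * ‖f x‖ ^ (p - 2) * ⟪f x, eul N n f x⟫)|
        ≤ p * ((‖(Real.log (pnorm N n x) : ℂ) * eul N n f x‖ * pnorm N n x ^ (-(N : ℝ) / p)) *
            (‖f x‖ ^ (p - 1) * pnorm N n x ^ (-(N : ℝ) / q))) := by
    intro x
    by_cases hx : pnorm N n x = 0
    · rw [hx]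
      rw [Real.zero_rpow hNne, Real.zero_rpow (div_ne_zero hNne hpne),
        Real.zero_rpow (div_ne_zero hNne hq0.ne')]
      simp
    · have hxp : 0 < pnorm N n x := lt_of_le_of_ne (pnorm_nonneg x) (Ne.symm hx)
      have h1 : |Real.log (pnorm N n x) * pnorm N n x ^ (-(N : ℝ)) *
          (p * ‖f x‖ ^ (p - 2) * ⟪f x, eul N n f x⟫)|
          ≤ |Real.log (pnorm N n x)| * pnorm N n x ^ (-(N : ℝ)) *
            (p * ‖f x‖ ^ (p - 2) * (‖f x‖ * ‖eul N n f x‖)) := by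
        rw [abs_mul, abs_mul, abs_mul, abs_mul,
          abs_of_nonneg (Real.rpow_nonneg (pnorm_nonneg x) _), abs_of_nonneg hp0.le,
          abs_of_nonneg (Real.rpow_nonneg (norm_nonneg _) _)]
        gcongr
        exact abs_real_inner_le_norm _ _
      refine h1.trans (le_of_eq ?_)
      have hmulsplit : pnorm N n x ^ (-(N : ℝ))
          = pnorm N n x ^ (-(N : ℝ) / p) * pnorm N n x ^ (-(N : ℝ) / q) := by
        rw [← Real.rpow_add hxp]
        congr 1
        have h := hpq.inv_add_inv_eq_one
        have h2 : -(N : ℝ) / p + -(N : ℝ) / q = -(N : ℝ) * (p⁻¹ + q⁻¹) := by ring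
        rw [h2, h, mul_one]
      rw [hmulsplit, norm_mul, Complex.norm_real, Real.norm_eq_abs,
        ← normpow_mul_norm hp (f x)]
      ring
  have hI2int : Integrable (fun x => Real.log (pnorm N n x) * pnorm N n x ^ (-(N : ℝ)) *
      (p * ‖f x‖ ^ (p - 2) * ⟪f x, eul N n f x⟫)) volume := by
    refine hABint.mono' mea_I2.aestronglyMeasurable
      (Filter.Eventually.of_forall fun x => ?_)
    rw [Real.norm_eq_abs]
    exact hI2bd x
  -- integral of divergence sum vanishes
  have hSint0 : (∫ x : Fin n → ℝ,
      (∑ j : Fin n, if (j : ℕ) < N then Dj N n p f j x else 0)) = 0 := by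
    rw [integral_finset_sum]
    · apply Finset.sum_eq_zero
      intro j _
      by_cases hj : (j : ℕ) < N
      · simp only [hj, if_true]
        exact ibp j
      · simp only [hj, if_false, integral_zero]
    · intro j _
      by_cases hj : (j : ℕ) < N
      · simp only [hj, if_true]
        exact hDjint j
      · simp only [hj, if_false]
        exact integrable_zero _ _ _
  have hLI2 : (∫ x : Fin n → ℝ, ‖f x‖ ^ p * pnorm N n x ^ (-(N : ℝ)))
      = - ∫ x : Fin n → ℝ, Real.log (pnorm N n x) * pnorm N n x ^ (-(N : ℝ)) *
          (p * ‖f x‖ ^ (p - 2) * ⟪f x, eul N n f x⟫) := by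
    have h0 : (∫ x : Fin n → ℝ, (‖f x‖ ^ p * pnorm N n x ^ (-(N : ℝ))
        + Real.log (pnorm N n x) * pnorm N n x ^ (-(N : ℝ)) *
            (p * ‖f x‖ ^ (p - 2) * ⟪f x, eul N n f x⟫))) = 0 := by
      rw [← hSint0]
      exact integral_congr_ae (Filter.Eventually.of_forall fun x => (hSsum x).symm)
    rw [integral_add hI1int hI2int] at h0
    linarith
  -- Hölder's inequality
  have hAmaster := master (fun x =>
      ‖(Real.log (pnorm N n x) : ℂ) * eul N n f x‖ * pnorm N n x ^ (-(N : ℝ) / p))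
    (fun x hx => (((Complex.continuous_ofReal.continuousAt.comp (hlogca x hx)).mul
        heulc.continuousAt).norm).mul (hrpowca _ x hx))
    (fun x hx => by simp [heulz x hx])
  have hAmem : MemLp (fun x =>
      ‖(Real.log (pnorm N n x) : ℂ) * eul N n f x‖ * pnorm N n x ^ (-(N : ℝ) / p))
      (ENNReal.ofReal p) volume :=
    hAmaster.1.memLp_of_hasCompactSupport hAmaster.2.1
  have hBmaster := master (fun x => ‖f x‖ ^ (p - 1) * pnorm N n x ^ (-(N : ℝ) / q))
    (fun x hx => (hnormp (p - 1) (by linarith)).continuousAt.mul (hrpowca _ x hx))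
    (fun x hx => by simp [hfz x hx, Real.zero_rpow hp1])
  have hBmem : MemLp (fun x => ‖f x‖ ^ (p - 1) * pnorm N n x ^ (-(N : ℝ) / q))
      (ENNReal.ofReal q) volume :=
    hBmaster.1.memLp_of_hasCompactSupport hBmaster.2.1
  have hA0 : ∀ x : Fin n → ℝ,
      0 ≤ ‖(Real.log (pnorm N n x) : ℂ) * eul N n f x‖ * pnorm N n x ^ (-(N : ℝ) / p) :=
    fun x => mul_nonneg (norm_nonneg _) (Real.rpow_nonneg (pnorm_nonneg x) _)
  have hB0 : ∀ x : Fin n → ℝ,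
      0 ≤ ‖f x‖ ^ (p - 1) * pnorm N n x ^ (-(N : ℝ) / q) :=
    fun x => mul_nonneg (Real.rpow_nonneg (norm_nonneg _) _)
      (Real.rpow_nonneg (pnorm_nonneg x) _)
  have hHolder := integral_mul_le_Lp_mul_Lq_of_nonneg hpq
    (Filter.Eventually.of_forall hA0) (Filter.Eventually.of_forall hB0) hAmem hBmem
  -- identify the powers
  have hAp : ∀ x : Fin n → ℝ,
      (‖(Real.log (pnorm N n x) : ℂ) * eul N n f x‖ * pnorm N n x ^ (-(N : ℝ) / p)) ^ p
        = ‖(Real.log (pnorm N n x) : ℂ) * eul N n f x‖ ^ p * pnorm N n x ^ (-(N : ℝ)) := by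
    intro x
    rw [Real.mul_rpow (norm_nonneg _) (Real.rpow_nonneg (pnorm_nonneg x) _),
      ← Real.rpow_mul (pnorm_nonneg x), div_mul_cancel₀ _ hpne]
  have hBq : ∀ x : Fin n → ℝ,
      (‖f x‖ ^ (p - 1) * pnorm N n x ^ (-(N : ℝ) / q)) ^ q
        = ‖f x‖ ^ p * pnorm N n x ^ (-(N : ℝ)) := by
    intro x
    rw [Real.mul_rpow (Real.rpow_nonneg (norm_nonneg _) _)
        (Real.rpow_nonneg (pnorm_nonneg x) _),
      ← Real.rpow_mul (norm_nonneg _), ← Real.rpow_mul (pnorm_nonneg x),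
      div_mul_cancel₀ _ hq0.ne']
    congr 2
    rw [hqdef]
    field_simp
  rw [integral_congr_ae (Filter.Eventually.of_forall hAp),
    integral_congr_ae (Filter.Eventually.of_forall hBq)] at hHolder
  -- chain of inequalities
  have hmain : (∫ x : Fin n → ℝ, ‖f x‖ ^ p * pnorm N n x ^ (-(N : ℝ)))
      ≤ p * ((∫ x : Fin n → ℝ,
          ‖(Real.log (pnorm N n x) : ℂ) * eul N n f x‖ ^ p * pnorm N n x ^ (-(N : ℝ))) ^ (1/p)
        * (∫ x : Fin n → ℝ, ‖f x‖ ^ p * pnorm N n x ^ (-(N : ℝ))) ^ (1/q)) := by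
    calc (∫ x : Fin n → ℝ, ‖f x‖ ^ p * pnorm N n x ^ (-(N : ℝ)))
        = - ∫ x : Fin n → ℝ, Real.log (pnorm N n x) * pnorm N n x ^ (-(N : ℝ)) *
            (p * ‖f x‖ ^ (p - 2) * ⟪f x, eul N n f x⟫) := hLI2
      _ ≤ |∫ x : Fin n → ℝ, Real.log (pnorm N n x) * pnorm N n x ^ (-(N : ℝ)) *
            (p * ‖f x‖ ^ (p - 2) * ⟪f x, eul N n f x⟫)| := neg_le_abs _
      _ ≤ ∫ x : Fin n → ℝ, |Real.log (pnorm N n x) * pnorm N n x ^ (-(N : ℝ)) *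
            (p * ‖f x‖ ^ (p - 2) * ⟪f x, eul N n f x⟫)| := by
          simpa only [Real.norm_eq_abs] using norm_integral_le_integral_norm
            (μ := (volume : Measure (Fin n → ℝ)))
            (fun x => Real.log (pnorm N n x) * pnorm N n x ^ (-(N : ℝ)) *
              (p * ‖f x‖ ^ (p - 2) * ⟪f x, eul N n f x⟫))
      _ ≤ ∫ x : Fin n → ℝ, p *
            ((‖(Real.log (pnorm N n x) : ℂ) * eul N n f x‖ * pnorm N n x ^ (-(N : ℝ) / p)) *
              (‖f x‖ ^ (p - 1) * pnorm N n x ^ (-(N : ℝ) / q))) :=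
          integral_mono hI2int.abs hABint fun x => hI2bd x
      _ = p * ∫ x : Fin n → ℝ,
            (‖(Real.log (pnorm N n x) : ℂ) * eul N n f x‖ * pnorm N n x ^ (-(N : ℝ) / p)) *
              (‖f x‖ ^ (p - 1) * pnorm N n x ^ (-(N : ℝ) / q)) := integral_const_mul p _
      _ ≤ p * ((∫ x : Fin n → ℝ,
            ‖(Real.log (pnorm N n x) : ℂ) * eul N n f x‖ ^ p * pnorm N n x ^ (-(N : ℝ))) ^ (1/p)
          * (∫ x : Fin n → ℝ, ‖f x‖ ^ p * pnorm N n x ^ (-(N : ℝ))) ^ (1/q)) :=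
          mul_le_mul_of_nonneg_left hHolder hp0.le
  -- rewrite the goal
  clear hSsum hSint0 hLI2 hHolder hI2bd hI2int hABint ibp hDjint hujint hDuj mea_Dj mea_drr mea_I2
  have e1 : (∫ x : Fin n → ℝ, ‖f x‖ ^ p / (pnorm N n x) ^ (N : ℝ))
      = ∫ x : Fin n → ℝ, ‖f x‖ ^ p * pnorm N n x ^ (-(N : ℝ)) := by
    apply integral_congr_ae
    filter_upwards with x
    rw [Real.rpow_neg (pnorm_nonneg x), div_eq_mul_inv]
  have e2 : (∫ x : Fin n → ℝ,
      ‖(Real.log (pnorm N n x) : ℂ) * eul N n f x‖ ^ p / (pnorm N n x) ^ (N : ℝ))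
      = ∫ x : Fin n → ℝ,
        ‖(Real.log (pnorm N n x) : ℂ) * eul N n f x‖ ^ p * pnorm N n x ^ (-(N : ℝ)) := by
    apply integral_congr_ae
    filter_upwards with x
    rw [Real.rpow_neg (pnorm_nonneg x), div_eq_mul_inv]
  rw [e1, e2]
  set L : ℝ := ∫ x : Fin n → ℝ, ‖f x‖ ^ p * pnorm N n x ^ (-(N : ℝ)) with hLdef
  set R : ℝ := ∫ x : Fin n → ℝ,
    ‖(Real.log (pnorm N n x) : ℂ) * eul N n f x‖ ^ p * pnorm N n x ^ (-(N : ℝ)) with hRdef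
  have hL0 : 0 ≤ L := by
    rw [hLdef]
    exact integral_nonneg fun x =>
      mul_nonneg (Real.rpow_nonneg (norm_nonneg _) _) (Real.rpow_nonneg (pnorm_nonneg x) _)
  rcases eq_or_lt_of_le hL0 with hL | hL
  · rw [← hL, Real.zero_rpow (one_div_ne_zero hpne)]
    have hR0 : 0 ≤ R := by
      rw [hRdef]
      exact integral_nonneg fun x =>
        mul_nonneg (Real.rpow_nonneg (norm_nonneg _) _) (Real.rpow_nonneg (pnorm_nonneg x) _)
    exact mul_nonneg hp0.le (Real.rpow_nonneg hR0 _)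
  · have hsplitL : L = L ^ (1/p) * L ^ (1/q) := by
      rw [← Real.rpow_add hL]
      rw [show (1:ℝ)/p + 1/q = 1 by
        have h := hpq.inv_add_inv_eq_one
        rw [one_div, one_div, h]]
      rw [Real.rpow_one]
    have hq' : 0 < L ^ (1/q) := Real.rpow_pos_of_pos hL _
    have h3 : L ^ (1/p) * L ^ (1/q) ≤ (p * R ^ (1/p)) * L ^ (1/q) := by
      rw [← hsplitL, mul_assoc]
      exact hmain
    exact le_of_mul_le_mul_right h3 hq'
end

section
/- Let $1 \le N \le n$, $1 < p < \infty$. For any complex-valued $f \in C_0^\infty(\mathbb{R}^n \setminus \{x'=0\})$, there holds the integration-by-parts identity $\int_{\mathbb{R}^n} \frac{|f(x)|^p}{|x'|^N} dx = -p \int_{\mathbb{R}^n} \mathrm{Re}\left( f(x) |f(x)|^{p-2} \overline{(x' \cdot \nabla_N f)(x)} \right) \frac{\log|x'|}{|x'|^N} dx$. -/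
open MeasureTheory Finset

/-! ### Auxiliary material -/

section Aux

variable {n N : ℕ}

/-- `Q N n x = |x'|²`, the squared partial norm. -/
noncomputable def auxQ (N n : ℕ) (x : Fin n → ℝ) : ℝ :=
  ∑ j : Fin n, if (j : ℕ) < N then (x j) ^ 2 else 0

/-- The derivative of `auxQ`. -/
noncomputable def auxLQ (N n : ℕ) (x : Fin n → ℝ) : (Fin n → ℝ) →L[ℝ] ℝ :=
  ∑ j : Fin n, if (j : ℕ) < N then (2 * x j) • ContinuousLinearMap.proj j else 0

/-- The projection `x ↦ x'` (extended by zero). -/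
def auxP (N n : ℕ) (x : Fin n → ℝ) : Fin n → ℝ := fun j => if (j : ℕ) < N then x j else 0

theorem aux_hQ (x : Fin n → ℝ) : HasFDerivAt (auxQ N n) (auxLQ N n x) x := by
  apply HasFDerivAt.fun_sum
  intro j _
  by_cases hj : (j : ℕ) < N
  · simp only [hj, if_true]
    have := ((ContinuousLinearMap.proj (R := ℝ) (φ := fun _ : Fin n => ℝ) j).hasFDerivAt
      (x := x)).mul ((ContinuousLinearMap.proj (R := ℝ) (φ := fun _ : Fin n => ℝ) j).hasFDerivAt
      (x := x))
    convert this using 1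
    · ext y; simp [sq]
    · ext v; simp [two_mul, mul_comm]; ring
    · ext v; simp only [ContinuousLinearMap.smul_apply, ContinuousLinearMap.add_apply, ContinuousLinearMap.proj_apply, smul_eq_mul]; ring
  · simpa only [hj, if_false] using hasFDerivAt_const (0:ℝ) x

theorem aux_contDiff_Q : ContDiff ℝ 1 (auxQ N n) := by
  apply ContDiff.sum
  intro j _
  by_cases hj : (j : ℕ) < N
  · simp only [hj, if_true]
    exact (ContinuousLinearMap.proj (R := ℝ) (φ := fun _ : Fin n => ℝ) j).contDiff.pow 2
  · simp only [hj, if_false]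
    exact contDiff_const

theorem aux_LQ_single {i : Fin n} (x : Fin n → ℝ) (hi : (i : ℕ) < N) :
    auxLQ N n x (Pi.single i 1) = 2 * x i := by
  simp only [auxLQ, ContinuousLinearMap.sum_apply]
  rw [Finset.sum_eq_single i]
  · simp [hi]
  · intro j _ hj
    by_cases h : (j : ℕ) < N <;> simp [h, Pi.single_apply, hj]
  · simp

theorem aux_Q_nonneg (x : Fin n → ℝ) : 0 ≤ auxQ N n x :=
  Finset.sum_nonneg fun j _ => by positivity

theorem aux_LQ_P (x : Fin n → ℝ) : auxLQ N n x (auxP N n x) = 2 * auxQ N n x := by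
  simp only [auxLQ, ContinuousLinearMap.sum_apply, auxQ, Finset.mul_sum]
  apply Finset.sum_congr rfl
  intro j _
  by_cases h : (j : ℕ) < N <;> simp [h, auxP] <;> ring

theorem aux_P_eq_sum (x : Fin n → ℝ) :
    auxP N n x = ∑ j : Fin n, if (j : ℕ) < N then (x j) • (Pi.single j 1 : Fin n → ℝ) else 0 := by
  ext k
  rw [Finset.sum_apply]
  rw [Finset.sum_eq_single k]
  · by_cases h : (k : ℕ) < N <;> simp [h, auxP]
  · intro j _ hj
    by_cases h : (j : ℕ) < N <;> simp [h, Pi.single_apply, hj]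
  · simp

theorem aux_continuous_P : Continuous (auxP N n) := by
  apply continuous_pi
  intro j
  by_cases h : (j : ℕ) < N
  · simpa only [auxP, h, if_true] using continuous_apply j
  · simpa only [auxP, h, if_false] using continuous_const

/-- The radial profile `φ s = log √s / (√s)^N` expressed via `rpow` of `s`. -/
noncomputable def auxphi (N : ℕ) (s : ℝ) : ℝ := (Real.log s / 2) * s ^ (-(N:ℝ)/2)

noncomputable def auxphi' (N : ℕ) (s : ℝ) : ℝ :=
  (s⁻¹/2) * s ^ (-(N:ℝ)/2) + (Real.log s / 2) * ((-(N:ℝ)/2) * s ^ (-(N:ℝ)/2 - 1))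

theorem aux_hasDerivAt_phi (N : ℕ) {s : ℝ} (hs : 0 < s) :
    HasDerivAt (auxphi N) (auxphi' N s) s :=
  ((Real.hasDerivAt_log hs.ne').div_const 2).mul
    (Real.hasDerivAt_rpow_const (p := -(N:ℝ)/2) (Or.inl hs.ne'))

theorem aux_contDiffAt_phi (N : ℕ) {s : ℝ} (hs : 0 < s) : ContDiffAt ℝ 1 (auxphi N) s := by
  apply ContDiffAt.mul
  · exact (Real.contDiffAt_log.mpr hs.ne').div_const 2
  · exact Real.contDiffAt_rpow_const_of_ne hs.ne'

theorem aux_key_identity (N : ℕ) {s : ℝ} (hs : 0 < s) :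
    (N:ℝ) * auxphi N s + auxphi' N s * (2*s) = s ^ (-(N:ℝ)/2) := by
  unfold auxphi auxphi'
  have h1 : s ^ (-(N:ℝ)/2 - 1) = s ^ (-(N:ℝ)/2) / s := by
    rw [show -(N:ℝ)/2 - 1 = -(N:ℝ)/2 + (-1) by ring, Real.rpow_add hs, Real.rpow_neg_one]; ring
  rw [h1]; field_simp; ring

theorem aux_sqrt_rpow (N : ℕ) {s : ℝ} (hs : 0 ≤ s) :
    (Real.sqrt s) ^ (N:ℝ) = s ^ ((N:ℝ)/2) := by
  rw [Real.sqrt_eq_rpow, ← Real.rpow_mul hs]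
  ring_nf

theorem aux_phi_eq (N : ℕ) {s : ℝ} (hs : 0 < s) :
    Real.log (Real.sqrt s) / (Real.sqrt s) ^ (N:ℝ) = auxphi N s := by
  rw [Real.log_sqrt hs.le, aux_sqrt_rpow N hs.le, auxphi, div_eq_mul_inv,
    ← Real.rpow_neg hs.le, neg_div]

/-- Integral of a line derivative of a Lipschitz compactly supported function vanishes. -/
theorem aux_integral_lineDeriv_zero (g : (Fin n → ℝ) → ℝ) (C : NNReal) (hg : LipschitzWith C g)
    (h'g : HasCompactSupport g) (v : Fin n → ℝ) :
    ∫ x, lineDeriv ℝ g x v = 0 := by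
  have h1 : LipschitzWith 0 (fun _ : Fin n → ℝ => (1:ℝ)) := LipschitzWith.const 1
  have h2 := LipschitzWith.integral_lineDeriv_mul_eq (μ := volume) h1 hg h'g (-v)
  have h3 : ∀ x : Fin n → ℝ, lineDeriv ℝ (fun _ : Fin n → ℝ => (1:ℝ)) x (-v) = 0 :=
    fun x => ((hasFDerivAt_const (1:ℝ) x).hasLineDerivAt (-v)).lineDeriv.trans (by simp)
  simp only [h3, zero_mul, integral_zero, neg_neg, mul_one] at h2
  exact h2.symm

end Aux

/-- Integration-by-parts identity for the cylindrical critical weight. -/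
theorem stmt1 (n N : ℕ) (p : ℝ) (hN1 : 1 ≤ N) (hNn : N ≤ n) (hp : 1 < p)
    (f : (Fin n → ℝ) → ℂ) (hf : ContDiff ℝ (⊤ : ℕ∞) f) (hcs : HasCompactSupport f)
    (hsupp : tsupport f ⊆ {x | pnorm N n x ≠ 0}) :
    ∫ x : Fin n → ℝ, ‖f x‖ ^ p / (pnorm N n x) ^ (N : ℝ) =
      -p * ∫ x : Fin n → ℝ,
        (‖f x‖ ^ (p - 2) * (f x * (starRingEnd ℂ) (eul N n f x)).re) *
          Real.log (pnorm N n x) / (pnorm N n x) ^ (N : ℝ) := by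
  classical
  -- basic notation
  set Q := auxQ N n with hQdef
  have hpn : ∀ x, pnorm N n x = Real.sqrt (Q x) := fun x => rfl
  set U : Set (Fin n → ℝ) := {x | 0 < Q x} with hUdef
  have hQc : Continuous Q := aux_contDiff_Q.continuous
  have hUopen : IsOpen U := isOpen_lt continuous_const hQc
  have hUiff : ∀ x, pnorm N n x ≠ 0 ↔ x ∈ U := by
    intro x
    rw [hpn x]
    constructor
    · intro h
      have := (Real.sqrt_eq_zero (aux_Q_nonneg x)).not.mp h
      exact lt_of_le_of_ne (aux_Q_nonneg x) (Ne.symm this)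
    · intro h
      exact (Real.sqrt_pos.mpr h).ne'
  have hsupp' : tsupport f ⊆ U := fun x hx => (hUiff x).mp (hsupp hx)
  have hfd : Differentiable ℝ f := hf.differentiable (by simp)
  -- the function u = ‖f‖^p and its derivative
  set u : (Fin n → ℝ) → ℝ := fun x => ‖f x‖ ^ p with hudef
  set Du : ∀ _ : Fin n → ℝ, (Fin n → ℝ) →L[ℝ] ℝ := fun x =>
    ((p * ‖f x‖ ^ (p-2)) • innerSL ℝ (f x)).comp (fderiv ℝ f x) with hDudef
  have hu : ∀ x, HasFDerivAt u (Du x) x := fun x =>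
    (hasFDerivAt_norm_rpow (f x) hp).comp x (hfd x).hasFDerivAt
  have hu1 : ContDiff ℝ 1 u := (hf.of_le (by simp)).norm_rpow hp
  have hufc : Continuous (fderiv ℝ u) := hu1.continuous_fderiv one_ne_zero
  -- vanishing near points outside the support
  have hvanish : ∀ x ∉ tsupport f, u =ᶠ[nhds x] 0 := by
    intro x hx
    filter_upwards [(isClosed_tsupport f).isOpen_compl.mem_nhds hx] with y hy
    simp only [hudef, image_eq_zero_of_notMem_tsupport hy, norm_zero, Pi.zero_apply]
    exact Real.zero_rpow (by positivity)
  have hfderiv_u_zero : ∀ x ∉ tsupport f, fderiv ℝ u x = 0 := by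
    intro x hx
    have : HasFDerivAt u (0 : (Fin n → ℝ) →L[ℝ] ℝ) x :=
      (hasFDerivAt_const (0:ℝ) x).congr_of_eventuallyEq (by filter_upwards [hvanish x hx] with y hy using hy)
    exact this.fderiv
  -- the weight Φ = log r / r^N
  set Φ : (Fin n → ℝ) → ℝ := fun x => Real.log (pnorm N n x) / (pnorm N n x) ^ (N:ℝ) with hΦdef
  have hΦeq : ∀ x ∈ U, Φ x = auxphi N (Q x) := by
    intro x hx
    rw [hΦdef]
    simp only
    rw [hpn x, aux_phi_eq N hx]
  have hΦev : ∀ x ∈ U, Φ =ᶠ[nhds x] (auxphi N) ∘ Q := by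
    intro x hx
    filter_upwards [hUopen.mem_nhds hx] with y hy
    exact hΦeq y hy
  have hΦd : ∀ x ∈ U, HasFDerivAt Φ (auxphi' N (Q x) • auxLQ N n x) x := by
    intro x hx
    exact (((aux_hasDerivAt_phi N hx).comp_hasFDerivAt x (aux_hQ x))).congr_of_eventuallyEq
      (hΦev x hx)
  have hΦc : ∀ x ∈ U, ContinuousAt Φ x := by
    intro x hx
    exact ((hΦd x hx).differentiableAt).continuousAt
  -- the vector field components g j = u * (x j * Φ)
  set g : Fin n → (Fin n → ℝ) → ℝ := fun j x => u x * (x j * Φ x) with hgdef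
  have hg_ev0 : ∀ (j : Fin n), ∀ x ∉ tsupport f, g j =ᶠ[nhds x] 0 := by
    intro j x hx
    filter_upwards [hvanish x hx] with y hy
    simp only [hgdef, hy, Pi.zero_apply, zero_mul]
  have hg1 : ∀ j, ContDiff ℝ 1 (g j) := by
    intro j
    rw [contDiff_iff_contDiffAt]
    intro x
    by_cases hx : x ∈ U
    · have hΦca : ContDiffAt ℝ 1 Φ x :=
        (((aux_contDiffAt_phi N hx).comp x aux_contDiff_Q.contDiffAt)).congr_of_eventuallyEq
          (hΦev x hx)
      exact hu1.contDiffAt.mul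
        (((ContinuousLinearMap.proj (R := ℝ) (φ := fun _ : Fin n => ℝ) j).contDiff.contDiffAt).mul hΦca)
    · have hx' : x ∉ tsupport f := fun h => hx (hsupp' h)
      exact contDiffAt_const.congr_of_eventuallyEq (hg_ev0 j x hx')
  have hgcs : ∀ j, HasCompactSupport (g j) := by
    intro j
    apply HasCompactSupport.intro hcs
    intro x hx
    simp only [hgdef, image_eq_zero_of_notMem_tsupport hx, hudef, norm_zero,
      Real.zero_rpow (by positivity : p ≠ 0), zero_mul]
  -- each divergence-term integral vanishes
  have hintzero : ∀ j, ∫ x, lineDeriv ℝ (g j) x (Pi.single j 1) = 0 := by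
    intro j
    obtain ⟨C, hC⟩ := ContDiff.lipschitzWith_of_hasCompactSupport (hgcs j) (hg1 j) one_ne_zero
    exact aux_integral_lineDeriv_zero (g j) C hC (hgcs j) (Pi.single j 1)
  -- the two integrands
  set A : (Fin n → ℝ) → ℝ := fun x => fderiv ℝ u x (auxP N n x) * Φ x with hAdef
  set B : (Fin n → ℝ) → ℝ := fun x => u x / (pnorm N n x) ^ (N:ℝ) with hBdef
  -- pointwise divergence identity
  have hpointwise : ∀ x, (∑ j : Fin n, if (j : ℕ) < N then
      lineDeriv ℝ (g j) x (Pi.single j 1) else 0) = A x + B x := by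
    intro x
    by_cases hx : x ∈ U
    · -- differentiable case
      have hfu := (hu x).fderiv
      have hgj : ∀ j : Fin n, (j:ℕ) < N → lineDeriv ℝ (g j) x (Pi.single j 1) =
          (x j * Φ x) * (fderiv ℝ u x (Pi.single j 1)) +
            u x * (Φ x + x j * (auxphi' N (Q x) * (2 * x j))) := by
        intro j hj
        have hin : HasFDerivAt (fun y : Fin n → ℝ => y j * Φ y)
            ((fun y : Fin n → ℝ => y j) x • (auxphi' N (Q x) • auxLQ N n x) +
              Φ x • ContinuousLinearMap.proj j) x :=
          ((ContinuousLinearMap.proj (R := ℝ) (φ := fun _ : Fin n => ℝ) j).hasFDerivAt).mul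
            (hΦd x hx)
        have hprod : HasFDerivAt (g j)
            (u x • ((fun y : Fin n → ℝ => y j) x • (auxphi' N (Q x) • auxLQ N n x) +
              Φ x • ContinuousLinearMap.proj j) + (x j * Φ x) • Du x) x :=
          (hu x).mul hin
        rw [(hprod.hasLineDerivAt _).lineDeriv]
        simp only [ContinuousLinearMap.add_apply, ContinuousLinearMap.smul_apply,
          ContinuousLinearMap.proj_apply, Pi.single_eq_same, aux_LQ_single x hj, hfu]
        simp only [smul_eq_mul]
        ring
      -- sum it up
      have hNcard : (∑ j : Fin n, if (j:ℕ) < N then (1:ℝ) else 0) = N := by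
        rw [Fin.sum_univ_eq_sum_range (fun i => if i < N then (1:ℝ) else 0) n]
        rw [← Finset.sum_subset (Finset.range_subset_range.mpr hNn)
          (fun i _ hi => by
            have : ¬ i < N := by simpa using hi
            simp [this])]
        rw [Finset.sum_congr rfl (fun i hi => by simp [Finset.mem_range.mp hi] : ∀ i ∈ Finset.range N, (if i < N then (1:ℝ) else 0) = 1)]
        simp
      have hDuP : fderiv ℝ u x (auxP N n x) =
          ∑ j : Fin n, if (j:ℕ) < N then x j * fderiv ℝ u x (Pi.single j 1) else 0 := by
        rw [aux_P_eq_sum, map_sum]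
        apply Finset.sum_congr rfl
        intro j _
        by_cases h : (j : ℕ) < N <;> simp [h]
      calc (∑ j : Fin n, if (j : ℕ) < N then lineDeriv ℝ (g j) x (Pi.single j 1) else 0)
          = ∑ j : Fin n, if (j : ℕ) < N then
              ((x j * Φ x) * (fderiv ℝ u x (Pi.single j 1)) +
               u x * (Φ x + x j * (auxphi' N (Q x) * (2 * x j)))) else 0 := by
            apply Finset.sum_congr rfl
            intro j _
            by_cases h : (j : ℕ) < N
            · simp only [h, if_true]; exact hgj j h
            · simp [h]
        _ = Φ x * (∑ j : Fin n, if (j:ℕ) < N then x j * fderiv ℝ u x (Pi.single j 1) else 0) +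
            (u x * Φ x * (∑ j : Fin n, if (j:ℕ) < N then (1:ℝ) else 0) +
             u x * (auxphi' N (Q x) * 2) * (∑ j : Fin n, if (j:ℕ) < N then (x j)^2 else 0)) := by
            rw [Finset.mul_sum, Finset.mul_sum, Finset.mul_sum, ← Finset.sum_add_distrib,
              ← Finset.sum_add_distrib]
            apply Finset.sum_congr rfl
            intro j _
            by_cases h : (j : ℕ) < N
            · simp only [h, if_true]; ring
            · simp [h]
        _ = Φ x * (∑ j : Fin n, if (j:ℕ) < N then x j * fderiv ℝ u x (Pi.single j 1) else 0) +
            u x * ((N : ℝ) * Φ x + auxphi' N (Q x) * (2 * Q x)) := by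
            rw [hNcard]
            have : (∑ j : Fin n, if (j:ℕ) < N then (x j)^2 else 0) = Q x := rfl
            rw [this]
            ring
        _ = A x + B x := by
            have hQr : (Q x) ^ (-(N:ℝ)/2) = ((pnorm N n x) ^ (N:ℝ))⁻¹ := by
              rw [hpn x, aux_sqrt_rpow N (aux_Q_nonneg x), ← Real.rpow_neg (aux_Q_nonneg x),
                neg_div]
            show _ = fderiv ℝ u x (auxP N n x) * Φ x + u x / (pnorm N n x) ^ (N:ℝ)
            rw [← hDuP, hΦeq x hx, aux_key_identity N hx, hQr, div_eq_mul_inv]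
            ring
    · -- vanishing case
      have hx' : x ∉ tsupport f := fun h => hx (hsupp' h)
      have h1 : ∀ j : Fin n, lineDeriv ℝ (g j) x (Pi.single j 1) = 0 := by
        intro j
        rw [Filter.EventuallyEq.lineDeriv_eq (hg_ev0 j x hx')]
        exact ((hasFDerivAt_const (0:ℝ) x).hasLineDerivAt _).lineDeriv.trans (by simp)
      have hux : u x = 0 := by
        simp only [hudef, image_eq_zero_of_notMem_tsupport hx', norm_zero]
        exact Real.zero_rpow (by positivity)
      have hA0 : A x = 0 := by
        rw [hAdef]; simp only [hfderiv_u_zero x hx']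
        simp
      have hB0 : B x = 0 := by rw [hBdef]; simp only [hux, zero_div]
      simp [h1, hA0, hB0]
  -- continuity and integrability of A and B
  have hAc : Continuous A := by
    rw [continuous_iff_continuousAt]
    intro x
    by_cases hx : x ∈ U
    · exact ((hufc.clm_apply aux_continuous_P).continuousAt).mul (hΦc x hx)
    · have hx' : x ∉ tsupport f := fun h => hx (hsupp' h)
      apply Filter.EventuallyEq.continuousAt (y := (0:ℝ))
      filter_upwards [(isClosed_tsupport f).isOpen_compl.mem_nhds hx'] with y hy
      simp only [hAdef, hfderiv_u_zero y hy]
      simp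
  have hBc : Continuous B := by
    rw [continuous_iff_continuousAt]
    intro x
    by_cases hx : x ∈ U
    · have hr : ContinuousAt (fun y => (pnorm N n y) ^ (N:ℝ)) x := by
        apply ContinuousAt.rpow_const
        · exact (Real.continuous_sqrt.comp hQc).continuousAt
        · left; exact ((hUiff x).mpr hx)
      have hpos : 0 < pnorm N n x :=
        lt_of_le_of_ne (Real.sqrt_nonneg _) (Ne.symm ((hUiff x).mpr hx))
      exact (hu1.continuous.continuousAt).div hr (Real.rpow_pos_of_pos hpos _).ne'
    · have hx' : x ∉ tsupport f := fun h => hx (hsupp' h)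
      apply Filter.EventuallyEq.continuousAt (y := (0:ℝ))
      filter_upwards [hvanish x hx'] with y hy
      simp only [hBdef, hy, Pi.zero_apply, zero_div]
  have hAcs : HasCompactSupport A := by
    apply HasCompactSupport.intro hcs
    intro x hx
    simp only [hAdef, hfderiv_u_zero x hx]
    simp
  have hBcs : HasCompactSupport B := by
    apply HasCompactSupport.intro hcs
    intro x hx
    have : u x = 0 := by
      simp only [hudef, image_eq_zero_of_notMem_tsupport hx, norm_zero]
      exact Real.zero_rpow (by positivity)
    simp only [hBdef, this, zero_div]
  have hAint : Integrable A := hAc.integrable_of_hasCompactSupport hAcs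
  have hBint : Integrable B := hBc.integrable_of_hasCompactSupport hBcs
  -- integrability of the line derivatives
  have hldint : ∀ j : Fin n, Integrable (fun x => lineDeriv ℝ (g j) x (Pi.single j 1)) := by
    intro j
    have heq : (fun x => lineDeriv ℝ (g j) x (Pi.single j 1)) =
        fun x => fderiv ℝ (g j) x (Pi.single j 1) := by
      funext x
      exact (((hg1 j).differentiable one_ne_zero x).hasFDerivAt.hasLineDerivAt _).lineDeriv
    rw [heq]
    apply Continuous.integrable_of_hasCompactSupport
    · exact ((hg1 j).continuous_fderiv one_ne_zero).clm_apply continuous_const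
    · apply HasCompactSupport.intro hcs
      intro x hx
      have : HasFDerivAt (g j) (0 : (Fin n → ℝ) →L[ℝ] ℝ) x :=
        (hasFDerivAt_const (0:ℝ) x).congr_of_eventuallyEq
          (by filter_upwards [hg_ev0 j x hx] with y hy using hy)
      rw [this.fderiv]
      simp
  -- conclusion : ∫ B = - ∫ A
  have hsum_int : ∫ x, (∑ j : Fin n, if (j : ℕ) < N then
      lineDeriv ℝ (g j) x (Pi.single j 1) else 0) = 0 := by
    rw [integral_finset_sum]
    · apply Finset.sum_eq_zero
      intro j _
      by_cases h : (j : ℕ) < N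
      · simp only [h, if_true]
        exact hintzero j
      · simp [h]
    · intro j _
      by_cases h : (j : ℕ) < N
      · simpa only [h, if_true] using hldint j
      · simp only [h, if_false]
        exact integrable_zero _ _ _
  have hABint : ∫ x, (A x + B x) = 0 := by
    rw [← hsum_int]
    apply integral_congr_ae
    filter_upwards with x
    exact (hpointwise x).symm
  rw [integral_add hAint hBint] at hABint
  have hBA : ∫ x, B x = - ∫ x, A x := by linarith
  -- identify A with the right-hand side integrand
  have hfinal : ∀ x, A x = p * ((‖f x‖ ^ (p - 2) * (f x * (starRingEnd ℂ) (eul N n f x)).re) *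
      Real.log (pnorm N n x) / (pnorm N n x) ^ (N : ℝ)) := by
    intro x
    have hDuapp : fderiv ℝ u x (auxP N n x) =
        p * ‖f x‖ ^ (p-2) * ((starRingEnd ℂ) (f x) * fderiv ℝ f x (auxP N n x)).re := by
      rw [(hu x).fderiv]
      simp only [hDudef, ContinuousLinearMap.coe_comp', Function.comp_apply,
        ContinuousLinearMap.smul_apply, innerSL_apply_apply, smul_eq_mul]
      rw [Complex.inner]
      try ring
    have hfP : fderiv ℝ f x (auxP N n x) = eul N n f x := by
      rw [aux_P_eq_sum, map_sum, eul]
      apply Finset.sum_congr rfl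
      intro j _
      by_cases h : (j : ℕ) < N
      · simp only [h, if_true, _root_.map_smul]
        simp [Complex.real_smul]
      · simp [h]
    have hre : ((starRingEnd ℂ) (f x) * eul N n f x).re =
        (f x * (starRingEnd ℂ) (eul N n f x)).re := by
      rw [← Complex.conj_re (f x * (starRingEnd ℂ) (eul N n f x))]
      simp [mul_comm]
    rw [hAdef]
    simp only
    rw [hDuapp, hfP, hre, hΦdef]
    simp only
    ring
  rw [show (∫ x : Fin n → ℝ, ‖f x‖ ^ p / (pnorm N n x) ^ (N : ℝ)) = ∫ x, B x from rfl, hBA]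
  have : ∫ x, A x = p * ∫ x : Fin n → ℝ,
      (‖f x‖ ^ (p - 2) * (f x * (starRingEnd ℂ) (eul N n f x)).re) *
        Real.log (pnorm N n x) / (pnorm N n x) ^ (N : ℝ) := by
    rw [← integral_const_mul]
    apply integral_congr_ae
    filter_upwards with x
    exact hfinal x
  rw [this]
  ring
end

section
/- Let $2 \le N \le n$. For any complex-valued $f \in C_0^\infty(\mathbb{R}^n \setminus \{x'=0\})$, we have $\left\| \frac{f}{|x'|} \right\|_{L^N(\mathbb{R}^n)} \le N \left\| \log|x'| \, \nabla f \right\|_{L^N(\mathbb{R}^n)}$, where $\nabla$ is the full gradient on $\mathbb{R}^n$. -/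
open MeasureTheory Finset

noncomputable def gnorm (N n : ℕ) (f : (Fin n → ℝ) → ℂ) (x : Fin n → ℝ) : ℝ :=
  Real.sqrt (∑ j : Fin n, if (j : ℕ) < N then ‖fderiv ℝ f x (Pi.single j 1)‖ ^ 2 else 0)

namespace BT
variable (N n : ℕ) (f : (Fin n → ℝ) → ℂ)

/-- the squared partial norm -/
def qf (x : Fin n → ℝ) : ℝ := ∑ j : Fin n, if (j : ℕ) < N then (x j) ^ 2 else 0

lemma qf_nonneg (x) : 0 ≤ qf N n x :=
  Finset.sum_nonneg fun j _ => by positivity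

lemma pnorm_eq (x) : pnorm N n x = Real.sqrt (qf N n x) := rfl

lemma sq_pnorm (x) : pnorm N n x ^ 2 = qf N n x := Real.sq_sqrt (qf_nonneg N n x)

lemma pnorm_nonneg (x) : 0 ≤ pnorm N n x := Real.sqrt_nonneg _

lemma pnorm_ne_zero {x} (h : qf N n x ≠ 0) : pnorm N n x ≠ 0 := by
  rw [pnorm_eq]
  exact Real.sqrt_ne_zero'.2 (lt_of_le_of_ne (qf_nonneg N n x) (Ne.symm h))

lemma pnorm_pos {x} (h : qf N n x ≠ 0) : 0 < pnorm N n x :=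
  lt_of_le_of_ne (pnorm_nonneg N n x) (Ne.symm (pnorm_ne_zero N n h))

lemma continuous_qf : Continuous (qf N n) := by
  unfold qf
  exact continuous_finset_sum _ fun j _ => by
    by_cases h : (j : ℕ) < N <;> simp [h] <;> fun_prop

lemma continuous_pnorm : Continuous (pnorm N n) :=
  Real.continuous_sqrt.comp (continuous_qf N n)

lemma isOpen_qne : IsOpen {x : Fin n → ℝ | qf N n x ≠ 0} :=
  isOpen_ne_fun (continuous_qf N n) continuous_const

end BT

namespace BT
variable {N n : ℕ} {f : (Fin n → ℝ) → ℂ}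

lemma qzero_nmem (hsupp : tsupport f ⊆ {x | pnorm N n x ≠ 0}) {x} (h : qf N n x = 0) :
    x ∉ tsupport f := by
  intro hx
  exact hsupp hx (by rw [pnorm_eq, h, Real.sqrt_zero])

lemma fderiv_zero_off {x} (h : x ∉ tsupport f) : fderiv ℝ f x = 0 := by
  have hx : (tsupport f)ᶜ ∈ nhds x := (isClosed_tsupport f).isOpen_compl.mem_nhds h
  have hev : f =ᶠ[nhds x] (fun _ => 0) := by
    filter_upwards [hx] with y hy
    exact image_eq_zero_of_notMem_tsupport hy
  rw [hev.fderiv_eq, fderiv_fun_const]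
  rfl

/-- glue: continuous on `{qf ≠ 0}` and vanishing off `tsupport f` implies continuous -/
lemma glue_continuous (hsupp : tsupport f ⊆ {x | pnorm N n x ≠ 0}) {g : (Fin n → ℝ) → ℝ}
    (h1 : ContinuousOn g {x | qf N n x ≠ 0}) (h0 : ∀ x ∉ tsupport f, g x = 0) :
    Continuous g := by
  rw [continuous_iff_continuousAt]
  intro x
  by_cases hq : qf N n x ≠ 0
  · exact h1.continuousAt ((isOpen_qne N n).mem_nhds hq)
  · push_neg at hq
    have hx : (tsupport f)ᶜ ∈ nhds x :=
      (isClosed_tsupport f).isOpen_compl.mem_nhds (qzero_nmem hsupp hq)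
    have hev : g =ᶠ[nhds x] (fun _ => 0) := by
      filter_upwards [hx] with y hy using h0 y hy
    exact (continuousAt_const (y := (0:ℝ))).congr hev.symm

lemma glue_hcs (hcs : HasCompactSupport f) {g : (Fin n → ℝ) → ℝ}
    (h0 : ∀ x ∉ tsupport f, g x = 0) : HasCompactSupport g := by
  rw [HasCompactSupport]
  refine IsCompact.of_isClosed_subset hcs (isClosed_tsupport g) ?_
  refine closure_minimal ?_ (isClosed_tsupport f)
  intro x hx
  by_contra h
  exact hx (h0 x h)

lemma glue_integrable (hsupp : tsupport f ⊆ {x | pnorm N n x ≠ 0}) (hcs : HasCompactSupport f)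
    {g : (Fin n → ℝ) → ℝ} (h1 : ContinuousOn g {x | qf N n x ≠ 0})
    (h0 : ∀ x ∉ tsupport f, g x = 0) : Integrable g :=
  (glue_continuous hsupp h1 h0).integrable_of_hasCompactSupport (glue_hcs hcs h0)

lemma glue_memLp (hsupp : tsupport f ⊆ {x | pnorm N n x ≠ 0}) (hcs : HasCompactSupport f)
    {g : (Fin n → ℝ) → ℝ} (h1 : ContinuousOn g {x | qf N n x ≠ 0})
    (h0 : ∀ x ∉ tsupport f, g x = 0) (p : ENNReal) : MemLp g p volume :=
  (glue_continuous hsupp h1 h0).memLp_of_hasCompactSupport (glue_hcs hcs h0)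

end BT


namespace BT
variable {n : ℕ}

/-- squared modulus of f -/
def uf (f : (Fin n → ℝ) → ℂ) (x : Fin n → ℝ) : ℝ :=
  (f x).re * (f x).re + (f x).im * (f x).im

lemma uf_nonneg (f : (Fin n → ℝ) → ℂ) (x) : 0 ≤ uf f x :=
  add_nonneg (mul_self_nonneg _) (mul_self_nonneg _)

lemma uf_eq (f : (Fin n → ℝ) → ℂ) (x) : uf f x = ‖f x‖ ^ 2 := by
  rw [Complex.sq_norm]
  simp [uf, Complex.normSq_apply]

/-- `|f|^N` -/
noncomputable def Phi (N : ℕ) (f : (Fin n → ℝ) → ℂ) (x : Fin n → ℝ) : ℝ :=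
  (uf f x) ^ ((N : ℝ) / 2)

/-- weight `log r / r^N` written multiplicatively -/
noncomputable def Hf (N n : ℕ) (x : Fin n → ℝ) : ℝ :=
  Real.log (pnorm N n x) * ((pnorm N n x) ^ N)⁻¹

/-- directional derivative of `uf` in direction `e j` -/
noncomputable def du (f : (Fin n → ℝ) → ℂ) (j : Fin n) (x : Fin n → ℝ) : ℝ :=
  2 * (f x).re * (fderiv ℝ f x (Pi.single j 1)).re +
    2 * (f x).im * (fderiv ℝ f x (Pi.single j 1)).im

/-- directional derivative of `Phi` in direction `e j` -/
noncomputable def dPhi (N : ℕ) (f : (Fin n → ℝ) → ℂ) (j : Fin n) (x : Fin n → ℝ) : ℝ :=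
  ((N : ℝ) / 2) * (uf f x) ^ ((N : ℝ) / 2 - 1) * du f j x

/-- directional derivative of `Hf` in direction `e j` (for `j < N`) -/
noncomputable def dH (N n : ℕ) (j : Fin n) (x : Fin n → ℝ) : ℝ :=
  x j * (1 - N * Real.log (pnorm N n x)) * (qf N n x * (pnorm N n x) ^ N)⁻¹

/-- the vector field component -/
noncomputable def psi (N : ℕ) (f : (Fin n → ℝ) → ℂ) (j : Fin n) (x : Fin n → ℝ) : ℝ :=
  Phi N f x * (x j * Hf N n x)

/-- its directional derivative in direction `e j` -/
noncomputable def dpsi (N : ℕ) (f : (Fin n → ℝ) → ℂ) (j : Fin n) (x : Fin n → ℝ) : ℝ :=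
  dPhi N f j x * (x j * Hf N n x) + Phi N f x * (x j * dH N n j x + Hf N n x)

/-- derivative CLM of qf -/
noncomputable def Dq (N n : ℕ) (x : Fin n → ℝ) : (Fin n → ℝ) →L[ℝ] ℝ :=
  ∑ j : Fin n, (if (j : ℕ) < N then 2 * x j else 0) • ContinuousLinearMap.proj j

lemma Dq_apply_single (N : ℕ) (x : Fin n → ℝ) (i : Fin n) :
    Dq N n x (Pi.single i 1) = if (i : ℕ) < N then 2 * x i else 0 := by
  simp only [Dq, ContinuousLinearMap.sum_apply, ContinuousLinearMap.smul_apply,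
    ContinuousLinearMap.proj_apply, Pi.single_apply, smul_eq_mul]
  rw [Finset.sum_eq_single i]
  · simp
  · intro b _ hb
    simp [hb]
  · simp

lemma hasFDerivAt_qf (N : ℕ) (x : Fin n → ℝ) : HasFDerivAt (qf N n) (Dq N n x) x := by
  unfold qf Dq
  apply HasFDerivAt.fun_sum
  intro j _
  by_cases h : (j : ℕ) < N
  · simp only [if_pos h]
    have hp : HasFDerivAt (fun y : Fin n → ℝ => y j)
        (ContinuousLinearMap.proj (R := ℝ) (φ := fun _ : Fin n => ℝ) j) x :=
      hasFDerivAt_apply j x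
    have h2 := hp.mul hp
    convert h2 using 1
    · ext y; simp [sq]
    · ext y; simp [sq]
    · rw [two_mul, add_smul]
  · simp only [if_neg h, zero_smul]
    exact hasFDerivAt_const (0:ℝ) x

end BT

namespace BT
variable {n N : ℕ} {f : (Fin n → ℝ) → ℂ}

lemma hasLineDerivAt_psi (hN2 : 2 ≤ N) (hf : ContDiff ℝ (⊤ : ℕ∞) f)
    (hsupp : tsupport f ⊆ {x | pnorm N n x ≠ 0}) (j : Fin n) (hj : (j : ℕ) < N)
    (x : Fin n → ℝ) :
    HasLineDerivAt ℝ (psi N f j) (dpsi N f j x) x (Pi.single j 1) := by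
  by_cases hq : qf N n x = 0
  · -- f vanishes near x, everything is zero
    have hx : x ∉ tsupport f := qzero_nmem hsupp hq
    have hnb : (tsupport f)ᶜ ∈ nhds x := (isClosed_tsupport f).isOpen_compl.mem_nhds hx
    have hfx : f x = 0 := image_eq_zero_of_notMem_tsupport hx
    have hPhi0 : ∀ y ∉ tsupport f, Phi N f y = 0 := by
      intro y hy
      have : f y = 0 := image_eq_zero_of_notMem_tsupport hy
      simp [Phi, uf, this, Real.zero_rpow (by positivity : ((N:ℝ)/2) ≠ 0)]
    have hval : dpsi N f j x = 0 := by
      have hdu : du f j x = 0 := by simp [du, hfx]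
      have : Phi N f x = 0 := hPhi0 x hx
      simp [dpsi, dPhi, hdu, this]
    rw [hval]
    have hev : psi N f j =ᶠ[nhds x] (fun _ => 0) := by
      filter_upwards [hnb] with y hy
      simp [psi, hPhi0 y hy]
    have h0 : HasFDerivAt (psi N f j) (0 : (Fin n → ℝ) →L[ℝ] ℝ) x :=
      (hasFDerivAt_const (0:ℝ) x).congr_of_eventuallyEq hev
    simpa using h0.hasLineDerivAt (Pi.single j 1)
  · -- main computation
    obtain ⟨m, rfl⟩ : ∃ m, N = m + 2 := ⟨N - 2, by omega⟩
    set N := m + 2 with hN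
    have hr : pnorm N n x ≠ 0 := pnorm_ne_zero N n hq
    have hrpos : 0 < pnorm N n x := pnorm_pos N n hq
    have hqd := hasFDerivAt_qf N x
    have hrd : HasFDerivAt (pnorm N n)
        ((1 / (2 * Real.sqrt (qf N n x))) • Dq N n x) x :=
      (Real.hasDerivAt_sqrt hq).comp_hasFDerivAt x hqd
    -- scalar weight function
    have hsc : HasDerivAt (fun t : ℝ => Real.log t * (t ^ N)⁻¹)
        ((pnorm N n x)⁻¹ * ((pnorm N n x ^ N)⁻¹) +
          Real.log (pnorm N n x) *
            (-((N : ℝ) * pnorm N n x ^ (N - 1)) / (pnorm N n x ^ N) ^ 2)) (pnorm N n x) :=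
      (Real.hasDerivAt_log hr).mul ((hasDerivAt_pow N (pnorm N n x)).inv (pow_ne_zero _ hr))
    have hH : HasFDerivAt (Hf N n)
        (((pnorm N n x)⁻¹ * ((pnorm N n x ^ N)⁻¹) +
          Real.log (pnorm N n x) *
            (-((N : ℝ) * pnorm N n x ^ (N - 1)) / (pnorm N n x ^ N) ^ 2)) •
          ((1 / (2 * Real.sqrt (qf N n x))) • Dq N n x)) x :=
      hsc.comp_hasFDerivAt x hrd
    -- |f|² and Φ
    have hfd : HasFDerivAt f (fderiv ℝ f x) x :=
      ((hf.differentiable (by simp)) x).hasFDerivAt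
    have hre : HasFDerivAt (fun y => (f y).re)
        (Complex.reCLM.comp (fderiv ℝ f x)) x := Complex.reCLM.hasFDerivAt.comp x hfd
    have him : HasFDerivAt (fun y => (f y).im)
        (Complex.imCLM.comp (fderiv ℝ f x)) x := Complex.imCLM.hasFDerivAt.comp x hfd
    have hu : HasFDerivAt (uf f)
        (((f x).re • Complex.reCLM.comp (fderiv ℝ f x) +
            (f x).re • Complex.reCLM.comp (fderiv ℝ f x)) +
          ((f x).im • Complex.imCLM.comp (fderiv ℝ f x) +
            (f x).im • Complex.imCLM.comp (fderiv ℝ f x))) x :=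
      (hre.mul hre).add (him.mul him)
    have hp1 : (1:ℝ) ≤ (N : ℝ) / 2 := by
      have : (2:ℝ) ≤ (N:ℝ) := by exact_mod_cast hN2
      linarith
    have hPhi : HasFDerivAt (Phi N f)
        (((N:ℝ)/2 * uf f x ^ ((N:ℝ)/2 - 1)) •
          (((f x).re • Complex.reCLM.comp (fderiv ℝ f x) +
            (f x).re • Complex.reCLM.comp (fderiv ℝ f x)) +
          ((f x).im • Complex.imCLM.comp (fderiv ℝ f x) +
            (f x).im • Complex.imCLM.comp (fderiv ℝ f x)))) x :=
      (Real.hasDerivAt_rpow_const (Or.inr hp1)).comp_hasFDerivAt x hu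
    have hproj : HasFDerivAt (fun y : Fin n → ℝ => y j)
        (ContinuousLinearMap.proj (R := ℝ) (φ := fun _ : Fin n => ℝ) j) x :=
      hasFDerivAt_apply j x
    have hpsi := hPhi.mul (hproj.mul hH)
    have := hpsi.hasLineDerivAt (Pi.single j 1)
    convert this using 1
    · rfl
    · rfl
    · rfl
    simp only [Pi.mul_apply, ContinuousLinearMap.add_apply, ContinuousLinearMap.smul_apply,
      ContinuousLinearMap.coe_comp', Function.comp_apply, ContinuousLinearMap.proj_apply,
      smul_eq_mul, Dq_apply_single, if_pos hj, Pi.single_eq_same, Complex.reCLM_apply,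
      Complex.imCLM_apply, ← pnorm_eq]
    simp only [dpsi, dPhi, dH, Hf, du]
    rw [show qf N n x = pnorm N n x ^ 2 from (sq_pnorm N n x).symm]
    have h1 : N - 1 = m + 1 := by omega
    rw [h1]
    field_simp
    ring

/-! ### vanishing off the support -/

lemma Phi_zero_off (hN2 : 2 ≤ N) {x} (hx : x ∉ tsupport f) : Phi N f x = 0 := by
  have : f x = 0 := image_eq_zero_of_notMem_tsupport hx
  simp [Phi, uf, this, Real.zero_rpow (by positivity : ((N:ℝ)/2) ≠ 0)]

lemma du_zero_off {x} (hx : x ∉ tsupport f) : du f j x = 0 := by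
  have : f x = 0 := image_eq_zero_of_notMem_tsupport hx
  simp [du, this]

lemma dPhi_zero_off {x} (hx : x ∉ tsupport f) : dPhi N f j x = 0 := by
  simp [dPhi, du_zero_off hx]

lemma psi_zero_off (hN2 : 2 ≤ N) {x} (hx : x ∉ tsupport f) : psi N f j x = 0 := by
  simp [psi, Phi_zero_off hN2 hx]

lemma dpsi_zero_off (hN2 : 2 ≤ N) {x} (hx : x ∉ tsupport f) : dpsi N f j x = 0 := by
  simp [dpsi, Phi_zero_off hN2 hx, dPhi_zero_off hx]

lemma gnorm_zero_off (N' : ℕ) {x} (hx : x ∉ tsupport f) : gnorm N' n f x = 0 := by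
  unfold gnorm
  rw [show (∑ j : Fin n, if (j : ℕ) < N' then ‖fderiv ℝ f x (Pi.single j 1)‖ ^ 2 else 0) = 0
    from Finset.sum_eq_zero fun j _ => by simp [fderiv_zero_off hx]]
  exact Real.sqrt_zero

/-! ### continuity -/

lemma continuous_rpow_comp {g : (Fin n → ℝ) → ℝ} (hg : Continuous g) {e : ℝ} (he : 0 ≤ e) :
    Continuous fun x => g x ^ e := by
  rw [continuous_iff_continuousAt]
  intro x
  exact (Real.continuousAt_rpow_const _ _ (Or.inr he)).comp hg.continuousAt

lemma continuous_uf (hf : ContDiff ℝ (⊤ : ℕ∞) f) : Continuous (uf f) := by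
  have h := hf.continuous
  unfold uf
  fun_prop

lemma continuous_Phi (hN2 : 2 ≤ N) (hf : ContDiff ℝ (⊤ : ℕ∞) f) : Continuous (Phi N f) :=
  continuous_rpow_comp (continuous_uf hf) (by positivity)

lemma continuous_dfj (hf : ContDiff ℝ (⊤ : ℕ∞) f) (j : Fin n) :
    Continuous fun x => fderiv ℝ f x (Pi.single j 1) :=
  (hf.continuous_fderiv (by simp)).clm_apply continuous_const

lemma continuous_du (hf : ContDiff ℝ (⊤ : ℕ∞) f) (j : Fin n) : Continuous (du f j) := by
  have h1 := (continuous_dfj hf j)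
  have h2 := hf.continuous
  unfold du
  fun_prop

lemma continuous_dPhi (hN2 : 2 ≤ N) (hf : ContDiff ℝ (⊤ : ℕ∞) f) (j : Fin n) :
    Continuous (dPhi N f j) := by
  have h1 := continuous_rpow_comp (continuous_uf hf) (e := (N:ℝ)/2 - 1)
    (by
      have : (2:ℝ) ≤ (N:ℝ) := by exact_mod_cast hN2
      linarith)
  have h2 := continuous_du hf j
  unfold dPhi
  fun_prop

lemma continuous_gnorm (N' : ℕ) (hf : ContDiff ℝ (⊤ : ℕ∞) f) : Continuous (gnorm N' n f) := by
  unfold gnorm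
  apply Real.continuous_sqrt.comp
  apply continuous_finset_sum
  intro j _
  by_cases h : (j : ℕ) < N'
  · simp only [if_pos h]
    exact ((continuous_dfj hf j).norm).pow 2
  · simp only [if_neg h]
    exact continuous_const

lemma continuousOn_Hf : ContinuousOn (Hf N n) {x | qf N n x ≠ 0} := by
  apply ContinuousOn.mul
  · exact ContinuousOn.log (continuous_pnorm N n).continuousOn
      fun x hx => pnorm_ne_zero N n hx
  · exact ContinuousOn.inv₀ ((continuous_pnorm N n).pow N).continuousOn
      fun x hx => pow_ne_zero _ (pnorm_ne_zero N n hx)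

lemma continuousOn_dH (j : Fin n) : ContinuousOn (dH N n j) {x | qf N n x ≠ 0} := by
  apply ContinuousOn.mul
  · apply ContinuousOn.mul (continuous_apply j).continuousOn
    exact (continuousOn_const.sub (continuousOn_const.mul
      (ContinuousOn.log (continuous_pnorm N n).continuousOn
        fun x hx => pnorm_ne_zero N n hx)))
  · exact ContinuousOn.inv₀ ((continuous_qf N n).continuousOn.mul
      ((continuous_pnorm N n).pow N).continuousOn)
      fun x hx => mul_ne_zero hx (pow_ne_zero _ (pnorm_ne_zero N n hx))

/-! ### integrability -/

variable (hN2 : 2 ≤ N) (hf : ContDiff ℝ (⊤ : ℕ∞) f) (hcs : HasCompactSupport f)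
  (hsupp : tsupport f ⊆ {x | pnorm N n x ≠ 0})

include hN2 hf hcs hsupp

lemma integrable_psi (j : Fin n) : Integrable (psi N f j) := by
  apply glue_integrable hsupp hcs
  · exact ((continuous_Phi hN2 hf).continuousOn.mul
      ((continuous_apply j).continuousOn.mul (continuousOn_Hf)))
  · exact fun x hx => psi_zero_off hN2 hx

lemma integrable_dpsi (j : Fin n) : Integrable (dpsi N f j) := by
  apply glue_integrable hsupp hcs
  · apply ContinuousOn.add
    · exact (continuous_dPhi hN2 hf j).continuousOn.mul
        ((continuous_apply j).continuousOn.mul continuousOn_Hf)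
    · exact (continuous_Phi hN2 hf).continuousOn.mul
        (((continuous_apply j).continuousOn.mul (continuousOn_dH j)).add continuousOn_Hf)
  · exact fun x hx => dpsi_zero_off hN2 hx

/-! ### integration by parts -/

lemma integral_dpsi_eq_zero (j : Fin n) (hj : (j : ℕ) < N) :
    ∫ x : Fin n → ℝ, dpsi N f j x = 0 := by
  have key := integral_bilinear_hasLineDerivAt_right_eq_neg_left_of_integrable
    (μ := (volume : Measure (Fin n → ℝ)))
    (f := fun _ : Fin n → ℝ => (1:ℝ)) (f' := fun _ => (0:ℝ))
    (g := psi N f j) (g' := dpsi N f j) (v := Pi.single j 1)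
    (B := ContinuousLinearMap.mul ℝ ℝ)
    (by simpa using (integrable_zero (Fin n → ℝ) ℝ (volume : Measure (Fin n → ℝ))))
    (by simpa using integrable_dpsi hN2 hf hcs hsupp j)
    (by simpa using integrable_psi hN2 hf hcs hsupp j)
    (fun x _ => by simpa using (hasFDerivAt_const (1:ℝ) x).hasLineDerivAt (Pi.single j 1))
    (fun x _ => hasLineDerivAt_psi hN2 hf hsupp j hj x)
  simpa using key

omit hN2 hf hcs hsupp

/-- the first-coordinates index set -/
def filt (N n : ℕ) : Finset (Fin n) := Finset.univ.filter fun j => (j : ℕ) < N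

lemma card_filt (hNn : N ≤ n) : (filt N n).card = N := by
  classical
  have : filt N n = Finset.image (Fin.castLE hNn) Finset.univ := by
    ext j
    simp only [filt, Finset.mem_filter, Finset.mem_univ, true_and, Finset.mem_image]
    constructor
    · intro h
      refine ⟨⟨(j : ℕ), h⟩, ?_⟩
      ext; simp
    · rintro ⟨i, -, rfl⟩
      exact i.isLt
  rw [this, Finset.card_image_of_injective _ (Fin.castLE_injective hNn)]
  simp

lemma sum_sq_filt (x : Fin n → ℝ) : ∑ j ∈ filt N n, x j ^ 2 = qf N n x := by
  rw [qf, ← Finset.sum_filter]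
  rfl

/-- the divergence identity -/
lemma sum_dpsi_eq (hN2 : 2 ≤ N) (hNn : N ≤ n)
    (hsupp : tsupport f ⊆ {x | pnorm N n x ≠ 0}) (x : Fin n → ℝ) :
    ∑ j ∈ filt N n, dpsi N f j x =
      Phi N f x * ((pnorm N n x) ^ N)⁻¹ +
        Hf N n x * ∑ j ∈ filt N n, x j * dPhi N f j x := by
  by_cases hq : qf N n x = 0
  · have hx : x ∉ tsupport f := qzero_nmem hsupp hq
    have h1 : ∀ j ∈ filt N n, dpsi N f j x = 0 := fun j _ => dpsi_zero_off hN2 hx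
    have h2 : ∀ j ∈ filt N n, x j * dPhi N f j x = 0 := fun j _ => by
      simp [dPhi_zero_off hx]
    rw [Finset.sum_eq_zero h1, Finset.sum_eq_zero h2, Phi_zero_off hN2 hx]
    ring
  · have hr : pnorm N n x ≠ 0 := pnorm_ne_zero N n hq
    have hq2 : qf N n x = pnorm N n x ^ 2 := (sq_pnorm N n x).symm
    have e1 : ∀ j ∈ filt N n, dpsi N f j x =
        Hf N n x * (x j * dPhi N f j x) +
          (Phi N f x * (x j * dH N n j x) + Phi N f x * Hf N n x) := fun j _ => by
      unfold dpsi; ring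
    rw [Finset.sum_congr rfl e1, Finset.sum_add_distrib, Finset.sum_add_distrib,
      ← Finset.mul_sum, ← Finset.mul_sum, Finset.sum_const, card_filt hNn, nsmul_eq_mul]
    have e2 : ∀ j ∈ filt N n, x j * dH N n j x =
        x j ^ 2 * ((1 - N * Real.log (pnorm N n x)) * (qf N n x * (pnorm N n x) ^ N)⁻¹) :=
      fun j _ => by unfold dH; ring
    rw [Finset.sum_congr rfl e2, ← Finset.sum_mul, sum_sq_filt]
    have key : qf N n x * ((1 - N * Real.log (pnorm N n x)) * (qf N n x * (pnorm N n x) ^ N)⁻¹) +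
        (N : ℝ) * Hf N n x = ((pnorm N n x) ^ N)⁻¹ := by
      unfold Hf
      field_simp
      ring
    calc Hf N n x * ∑ j ∈ filt N n, x j * dPhi N f j x +
          (Phi N f x * (qf N n x * ((1 - N * Real.log (pnorm N n x)) *
            (qf N n x * (pnorm N n x) ^ N)⁻¹)) + (N:ℝ) * (Phi N f x * Hf N n x))
        = Phi N f x * (qf N n x * ((1 - N * Real.log (pnorm N n x)) *
            (qf N n x * (pnorm N n x) ^ N)⁻¹) + (N:ℝ) * Hf N n x) +
          Hf N n x * ∑ j ∈ filt N n, x j * dPhi N f j x := by ring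
      _ = _ := by rw [key]

/-! ### pointwise identities and bounds -/

lemma norm_sq_c (z : ℂ) : ‖z‖ ^ 2 = z.re * z.re + z.im * z.im := by
  rw [Complex.sq_norm]
  simp [Complex.normSq_apply]

lemma Phi_eq (x : Fin n → ℝ) : Phi N f x = ‖f x‖ ^ (N : ℝ) := by
  rw [Phi, uf_eq, ← Real.rpow_natCast (‖f x‖) 2, ← Real.rpow_mul (norm_nonneg _)]
  congr 1
  push_cast
  ring

lemma integrand1_eq (hN2 : 2 ≤ N) (x : Fin n → ℝ) :
    Phi N f x * ((pnorm N n x) ^ N)⁻¹ = (‖f x‖ / pnorm N n x) ^ (N : ℝ) := by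
  have hN0 : (N : ℝ) ≠ 0 := by positivity
  by_cases hq : qf N n x = 0
  · have hr0 : pnorm N n x = 0 := by rw [pnorm_eq, hq, Real.sqrt_zero]
    rw [hr0]
    rw [zero_pow (by omega : N ≠ 0), div_zero, Real.zero_rpow hN0]
    simp
  · have hr : pnorm N n x ≠ 0 := pnorm_ne_zero N n hq
    rw [Real.div_rpow (norm_nonneg _) (pnorm_nonneg N n x), ← Phi_eq,
      Real.rpow_natCast, div_eq_mul_inv]

lemma gnorm_sq (N' : ℕ) (x : Fin n → ℝ) :
    gnorm N' n f x ^ 2 = ∑ j ∈ filt N' n, ‖fderiv ℝ f x (Pi.single j 1)‖ ^ 2 := by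
  rw [gnorm, Real.sq_sqrt, ← Finset.sum_filter]
  · rfl
  · exact Finset.sum_nonneg fun j _ => by positivity

lemma pow_aux {t : ℝ} (ht : 0 ≤ t) (hN2 : 2 ≤ N) :
    t ^ ((N : ℝ) - 2) * t = t ^ ((N : ℝ) - 1) := by
  rcases eq_or_lt_of_le ht with h | h
  · rw [← h, mul_zero, Real.zero_rpow]
    have : (2:ℝ) ≤ N := by exact_mod_cast hN2
    linarith
  · calc t ^ ((N:ℝ) - 2) * t = t ^ ((N:ℝ) - 2) * t ^ (1:ℝ) := by rw [Real.rpow_one]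
      _ = t ^ (((N:ℝ) - 2) + 1) := (Real.rpow_add h _ _).symm
      _ = t ^ ((N:ℝ) - 1) := by congr 1; ring

/-- Cauchy–Schwarz bound for the divergence term -/
lemma HT_bound (hN2 : 2 ≤ N) (hNn : N ≤ n) (hf : ContDiff ℝ (⊤ : ℕ∞) f)
    (hsupp : tsupport f ⊆ {x | pnorm N n x ≠ 0}) (x : Fin n → ℝ) :
    -(Hf N n x * ∑ j ∈ filt N n, x j * dPhi N f j x) ≤
      (N : ℝ) * ((‖f x‖ / pnorm N n x) ^ ((N : ℝ) - 1) *
        (|Real.log (pnorm N n x)| * gnorm N n f x)) := by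
  set r := pnorm N n x with hrdef
  set t := ‖f x‖ with htdef
  set G := gnorm N n f x with hGdef
  have hG0 : 0 ≤ G := Real.sqrt_nonneg _
  have ht0 : 0 ≤ t := norm_nonneg _
  by_cases hq : qf N n x = 0
  · have hr0 : r = 0 := by rw [hrdef, pnorm_eq, hq, Real.sqrt_zero]
    have hH0 : Hf N n x = 0 := by
      rw [Hf, ← hrdef, hr0]
      simp [zero_pow (by omega : N ≠ 0)]
    rw [hH0, zero_mul, neg_zero]
    positivity
  · have hr : r ≠ 0 := pnorm_ne_zero N n hq
    have hrpos : 0 < r := pnorm_pos N n hq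
    set T := ∑ j ∈ filt N n, x j * dPhi N f j x with hTdef
    set c := ((N : ℝ) / 2) * (uf f x) ^ ((N : ℝ) / 2 - 1) with hcdef
    have hc0 : 0 ≤ c := by
      rw [hcdef]
      have := uf_nonneg f x
      positivity
    have hu_eq : uf f x = t ^ 2 := by rw [uf_eq]
    have hu_pow : (uf f x) ^ ((N : ℝ) / 2 - 1) = t ^ ((N : ℝ) - 2) := by
      rw [hu_eq, ← Real.rpow_natCast t 2, ← Real.rpow_mul ht0]
      congr 1
      push_cast
      ring
    have h2c : 2 * c = (N : ℝ) * t ^ ((N : ℝ) - 2) := by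
      rw [hcdef, hu_pow]; ring
    set R := r * ((N : ℝ) * t ^ ((N : ℝ) - 1) * G) with hRdef
    have hR0 : 0 ≤ R := by positivity
    have step1 : T ^ 2 ≤ R ^ 2 := by
      have cs := Finset.sum_mul_sq_le_sq_mul_sq (filt N n) (fun j => x j)
        (fun j => dPhi N f j x)
      have h2 : ∑ j ∈ filt N n, dPhi N f j x ^ 2 ≤
          (2 * c) ^ 2 * (uf f x) * G ^ 2 := by
        rw [hGdef, gnorm_sq, Finset.mul_sum]
        apply Finset.sum_le_sum
        intro j _
        have hdu : du f j x ^ 2 ≤ 4 * (uf f x) * ‖fderiv ℝ f x (Pi.single j 1)‖ ^ 2 := by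
          rw [du, uf, norm_sq_c]
          set a := (f x).re; set b := (f x).im
          set cc := (fderiv ℝ f x (Pi.single j 1)).re
          set d := (fderiv ℝ f x (Pi.single j 1)).im
          nlinarith [sq_nonneg (a * d - b * cc), sq_nonneg (a * cc + b * d)]
        have he : dPhi N f j x ^ 2 = c ^ 2 * du f j x ^ 2 := by rw [dPhi, hcdef]; ring
        rw [he]
        calc c ^ 2 * du f j x ^ 2 ≤
            c ^ 2 * (4 * (uf f x) * ‖fderiv ℝ f x (Pi.single j 1)‖ ^ 2) :=
              mul_le_mul_of_nonneg_left hdu (by positivity)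
          _ = (2 * c) ^ 2 * uf f x * ‖fderiv ℝ f x (Pi.single j 1)‖ ^ 2 := by ring
      have key : qf N n x * ((2 * c) ^ 2 * uf f x * G ^ 2) = R ^ 2 := by
        have hq2 : qf N n x = r ^ 2 := (sq_pnorm N n x).symm
        rw [hq2, h2c, hu_eq, hRdef, ← pow_aux ht0 hN2]
        ring
      calc T ^ 2 ≤ (∑ j ∈ filt N n, x j ^ 2) * ∑ j ∈ filt N n, dPhi N f j x ^ 2 := cs
        _ ≤ (∑ j ∈ filt N n, x j ^ 2) * ((2 * c) ^ 2 * (uf f x) * G ^ 2) := by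
            apply mul_le_mul_of_nonneg_left h2
            exact Finset.sum_nonneg fun j _ => sq_nonneg _
        _ = R ^ 2 := by rw [sum_sq_filt]; exact key
    have habs : |T| ≤ R := by
      have h1 := Real.sqrt_le_sqrt step1
      rwa [Real.sqrt_sq_eq_abs, Real.sqrt_sq hR0] at h1
    have hHabs : |Hf N n x| = |Real.log r| * (r ^ N)⁻¹ := by
      rw [Hf, ← hrdef, abs_mul, abs_of_nonneg (by positivity : (0:ℝ) ≤ (r ^ N)⁻¹)]
    calc -(Hf N n x * T) ≤ |Hf N n x * T| := neg_le_abs _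
      _ = |Hf N n x| * |T| := abs_mul _ _
      _ ≤ |Hf N n x| * R := mul_le_mul_of_nonneg_left habs (abs_nonneg _)
      _ = |Real.log r| * (r ^ N)⁻¹ * R := by rw [hHabs]
      _ = (N : ℝ) * ((t / r) ^ ((N : ℝ) - 1) * (|Real.log r| * G)) := by
          rw [Real.div_rpow ht0 (le_of_lt hrpos), div_eq_mul_inv, hRdef]
          have hrr : (r ^ N : ℝ)⁻¹ * r = (r ^ ((N : ℝ) - 1))⁻¹ := by
            rw [Real.rpow_sub hrpos, Real.rpow_one, Real.rpow_natCast]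
            field_simp
          calc |Real.log r| * (r ^ N)⁻¹ * (r * ((N:ℝ) * t ^ ((N:ℝ)-1) * G))
              = ((r ^ N : ℝ)⁻¹ * r) * (|Real.log r| * ((N:ℝ) * t ^ ((N:ℝ)-1) * G)) := by ring
            _ = (r ^ ((N:ℝ)-1))⁻¹ * (|Real.log r| * ((N:ℝ) * t ^ ((N:ℝ)-1) * G)) := by rw [hrr]
            _ = (N:ℝ) * (t ^ ((N:ℝ)-1) * (r ^ ((N:ℝ)-1))⁻¹ * (|Real.log r| * G)) := by ring

/-! ### remaining integrability -/

lemma continuousOn_base (hf : ContDiff ℝ (⊤ : ℕ∞) f) :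
    ContinuousOn (fun x => ‖f x‖ / pnorm N n x) {x : Fin n → ℝ | qf N n x ≠ 0} :=
  (hf.continuous.norm.continuousOn).div (continuous_pnorm N n).continuousOn
    fun x hx => pnorm_ne_zero N n hx

lemma integrable_intg1 (hN2 : 2 ≤ N) (hf : ContDiff ℝ (⊤ : ℕ∞) f) (hcs : HasCompactSupport f)
    (hsupp : tsupport f ⊆ {x | pnorm N n x ≠ 0}) :
    Integrable (fun x : Fin n → ℝ => (‖f x‖ / pnorm N n x) ^ (N : ℝ)) := by
  apply glue_integrable hsupp hcs
  · exact (continuousOn_base hf).rpow_const fun x _ => Or.inr (by positivity)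
  · intro x hx
    rw [image_eq_zero_of_notMem_tsupport hx]
    simp [Real.zero_rpow (by positivity : (N:ℝ) ≠ 0)]

lemma T_zero_off {x} (hx : x ∉ tsupport f) :
    ∑ j ∈ filt N n, x j * dPhi N f j x = 0 :=
  Finset.sum_eq_zero fun j _ => by simp [dPhi_zero_off hx]

lemma continuous_T (hN2 : 2 ≤ N) (hf : ContDiff ℝ (⊤ : ℕ∞) f) :
    Continuous fun x : Fin n → ℝ => ∑ j ∈ filt N n, x j * dPhi N f j x :=
  continuous_finset_sum _ fun j _ => (continuous_apply j).mul (continuous_dPhi hN2 hf j)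

lemma integrable_HT (hN2 : 2 ≤ N) (hf : ContDiff ℝ (⊤ : ℕ∞) f) (hcs : HasCompactSupport f)
    (hsupp : tsupport f ⊆ {x | pnorm N n x ≠ 0}) :
    Integrable (fun x : Fin n → ℝ =>
      Hf N n x * ∑ j ∈ filt N n, x j * dPhi N f j x) := by
  apply glue_integrable hsupp hcs
  · exact continuousOn_Hf.mul (continuous_T hN2 hf).continuousOn
  · intro x hx
    rw [T_zero_off hx, mul_zero]

lemma continuousOn_F1 (hN2 : 2 ≤ N) (hf : ContDiff ℝ (⊤ : ℕ∞) f) :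
    ContinuousOn (fun x => (‖f x‖ / pnorm N n x) ^ ((N:ℝ) - 1))
      {x : Fin n → ℝ | qf N n x ≠ 0} := by
  have h2 : (2:ℝ) ≤ (N:ℝ) := by exact_mod_cast hN2
  exact (continuousOn_base hf).rpow_const fun x _ => Or.inr (by linarith)

lemma F1_zero_off (hN2 : 2 ≤ N) {x} (hx : x ∉ tsupport f) :
    (‖f x‖ / pnorm N n x) ^ ((N:ℝ) - 1) = 0 := by
  have h2 : (2:ℝ) ≤ (N:ℝ) := by exact_mod_cast hN2
  rw [image_eq_zero_of_notMem_tsupport hx]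
  simp [Real.zero_rpow (by linarith : (N:ℝ) - 1 ≠ 0)]

lemma continuousOn_F2 (N' : ℕ) (hf : ContDiff ℝ (⊤ : ℕ∞) f) :
    ContinuousOn (fun x => |Real.log (pnorm N n x)| * gnorm N' n f x)
      {x : Fin n → ℝ | qf N n x ≠ 0} :=
  ((ContinuousOn.log (continuous_pnorm N n).continuousOn
      fun x hx => pnorm_ne_zero N n hx).abs).mul (continuous_gnorm N' hf).continuousOn

lemma F2_zero_off (N' : ℕ) {x} (hx : x ∉ tsupport f) :
    |Real.log (pnorm N n x)| * gnorm N' n f x = 0 := by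
  rw [gnorm_zero_off N' hx, mul_zero]

lemma memLp_F1 (hN2 : 2 ≤ N) (hf : ContDiff ℝ (⊤ : ℕ∞) f) (hcs : HasCompactSupport f)
    (hsupp : tsupport f ⊆ {x | pnorm N n x ≠ 0}) (p : ENNReal) :
    MemLp (fun x => (‖f x‖ / pnorm N n x) ^ ((N:ℝ) - 1)) p volume :=
  glue_memLp hsupp hcs (continuousOn_F1 hN2 hf) (fun x hx => F1_zero_off hN2 hx) p

lemma memLp_F2 (N' : ℕ) (hf : ContDiff ℝ (⊤ : ℕ∞) f) (hcs : HasCompactSupport f)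
    (hsupp : tsupport f ⊆ {x | pnorm N n x ≠ 0}) (p : ENNReal) :
    MemLp (fun x => |Real.log (pnorm N n x)| * gnorm N' n f x) p volume :=
  glue_memLp hsupp hcs (continuousOn_F2 N' hf) (fun x hx => F2_zero_off N' hx) p

lemma integrable_NF1F2 (hN2 : 2 ≤ N) (hf : ContDiff ℝ (⊤ : ℕ∞) f) (hcs : HasCompactSupport f)
    (hsupp : tsupport f ⊆ {x | pnorm N n x ≠ 0}) :
    Integrable (fun x : Fin n → ℝ => (N:ℝ) * ((‖f x‖ / pnorm N n x) ^ ((N:ℝ) - 1) *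
      (|Real.log (pnorm N n x)| * gnorm N n f x))) := by
  apply glue_integrable hsupp hcs
  · exact continuousOn_const.mul ((continuousOn_F1 hN2 hf).mul (continuousOn_F2 N hf))
  · intro x hx
    rw [F1_zero_off hN2 hx, zero_mul, mul_zero]

lemma integrable_F2pow (N' : ℕ) (hN2 : 2 ≤ N) (hf : ContDiff ℝ (⊤ : ℕ∞) f) (hcs : HasCompactSupport f)
    (hsupp : tsupport f ⊆ {x | pnorm N n x ≠ 0}) :
    Integrable (fun x : Fin n → ℝ =>
      (|Real.log (pnorm N n x)| * gnorm N' n f x) ^ (N : ℝ)) := by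
  apply glue_integrable hsupp hcs
  · exact (continuousOn_F2 N' hf).rpow_const fun x _ => Or.inr (by positivity)
  · intro x hx
    rw [F2_zero_off N' hx, Real.zero_rpow (by positivity : (N:ℝ) ≠ 0)]

lemma gnorm_nonneg (N' : ℕ) (x : Fin n → ℝ) : 0 ≤ gnorm N' n f x := Real.sqrt_nonneg _

lemma gnorm_mono (hNn : N ≤ n) (x : Fin n → ℝ) : gnorm N n f x ≤ gnorm n n f x := by
  apply Real.sqrt_le_sqrt
  apply Finset.sum_le_sum
  intro j _
  by_cases h : (j : ℕ) < N
  · simp [h, j.isLt]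
  · simp only [if_neg h, if_pos j.isLt]
    positivity

end BT

open BT in
/-- Critical case of the Badiale–Tarantello cylindrical Hardy inequality. -/
theorem stmt6 (n N : ℕ) (hN2 : 2 ≤ N) (hNn : N ≤ n)
    (f : (Fin n → ℝ) → ℂ) (hf : ContDiff ℝ (⊤ : ℕ∞) f) (hcs : HasCompactSupport f)
    (hsupp : tsupport f ⊆ {x | pnorm N n x ≠ 0}) :
    (∫ x : Fin n → ℝ, (‖f x‖ / pnorm N n x) ^ (N : ℝ)) ^ (1 / (N : ℝ)) ≤
      N * (∫ x : Fin n → ℝ,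
        (|Real.log (pnorm N n x)| * gnorm n n f x) ^ (N : ℝ)) ^ (1 / (N : ℝ)) := by
  have hN2R : (2:ℝ) ≤ (N:ℝ) := by exact_mod_cast hN2
  set A := ∫ x : Fin n → ℝ, (‖f x‖ / pnorm N n x) ^ (N : ℝ) with hAdef
  set B := ∫ x : Fin n → ℝ, (|Real.log (pnorm N n x)| * gnorm N n f x) ^ (N : ℝ) with hBdef
  set B' := ∫ x : Fin n → ℝ, (|Real.log (pnorm N n x)| * gnorm n n f x) ^ (N : ℝ) with hB'def
  have hbase0 : ∀ x : Fin n → ℝ, 0 ≤ ‖f x‖ / pnorm N n x := fun x =>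
    div_nonneg (norm_nonneg _) (pnorm_nonneg N n x)
  have hF2b0 : ∀ (N' : ℕ) (x : Fin n → ℝ), 0 ≤ |Real.log (pnorm N n x)| * gnorm N' n f x :=
    fun N' x => mul_nonneg (abs_nonneg _) (gnorm_nonneg N' x)
  have hA0 : 0 ≤ A := integral_nonneg fun x => Real.rpow_nonneg (hbase0 x) _
  have hB0 : 0 ≤ B := integral_nonneg fun x => Real.rpow_nonneg (hF2b0 N x) _
  have hB'0 : 0 ≤ B' := integral_nonneg fun x => Real.rpow_nonneg (hF2b0 n x) _
  have hBB' : B ≤ B' := by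
    apply integral_mono (integrable_F2pow N hN2 hf hcs hsupp) (integrable_F2pow n hN2 hf hcs hsupp)
    intro x
    apply Real.rpow_le_rpow (hF2b0 N x)
    · exact mul_le_mul_of_nonneg_left (gnorm_mono hNn x) (abs_nonneg _)
    · positivity
  -- Step 1: integration by parts
  have hIBP : A = ∫ x : Fin n → ℝ,
      -(Hf N n x * ∑ j ∈ filt N n, x j * dPhi N f j x) := by
    have hsum0 : ∫ x : Fin n → ℝ, ∑ j ∈ filt N n, dpsi N f j x = 0 := by
      rw [integral_finset_sum _ fun j _ => integrable_dpsi hN2 hf hcs hsupp j]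
      apply Finset.sum_eq_zero
      intro j hj
      exact integral_dpsi_eq_zero hN2 hf hcs hsupp j (by simpa [filt] using hj)
    have hptw : ∀ x : Fin n → ℝ, ∑ j ∈ filt N n, dpsi N f j x =
        (‖f x‖ / pnorm N n x) ^ (N : ℝ) +
          Hf N n x * ∑ j ∈ filt N n, x j * dPhi N f j x := by
      intro x
      rw [sum_dpsi_eq hN2 hNn hsupp x, integrand1_eq hN2 x]
    rw [show (fun x : Fin n → ℝ => ∑ j ∈ filt N n, dpsi N f j x) =
        fun x => (‖f x‖ / pnorm N n x) ^ (N : ℝ) +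
          Hf N n x * ∑ j ∈ filt N n, x j * dPhi N f j x from funext hptw] at hsum0
    rw [integral_add (integrable_intg1 hN2 hf hcs hsupp) (integrable_HT hN2 hf hcs hsupp)]
      at hsum0
    rw [integral_neg]
    linarith
  -- Step 2: pointwise bound
  have hStep2 : A ≤ (N:ℝ) * ∫ x : Fin n → ℝ, (‖f x‖ / pnorm N n x) ^ ((N:ℝ) - 1) *
      (|Real.log (pnorm N n x)| * gnorm N n f x) := by
    rw [hIBP, ← integral_const_mul]
    apply integral_mono ((integrable_HT hN2 hf hcs hsupp).neg) (integrable_NF1F2 hN2 hf hcs hsupp)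
    exact fun x => HT_bound hN2 hNn hf hsupp x
  -- Step 3: Hölder
  set p' : ℝ := (N:ℝ) / ((N:ℝ) - 1) with hp'def
  have hpq : Real.HolderConjugate p' (N:ℝ) := by
    rw [Real.holderConjugate_iff]
    constructor
    · rw [hp'def, lt_div_iff₀ (by linarith)]
      linarith
    · rw [hp'def]
      field_simp
      ring
  have hHolder : (∫ x : Fin n → ℝ, (‖f x‖ / pnorm N n x) ^ ((N:ℝ) - 1) *
      (|Real.log (pnorm N n x)| * gnorm N n f x)) ≤ A ^ (1 / p') * B ^ (1 / (N:ℝ)) := by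
    have key := integral_mul_le_Lp_mul_Lq_of_nonneg (μ := (volume : Measure (Fin n → ℝ))) hpq
      (f := fun x => (‖f x‖ / pnorm N n x) ^ ((N:ℝ) - 1))
      (g := fun x => |Real.log (pnorm N n x)| * gnorm N n f x)
      (Filter.Eventually.of_forall fun x => Real.rpow_nonneg (hbase0 x) _)
      (Filter.Eventually.of_forall fun x => hF2b0 N x)
      (memLp_F1 hN2 hf hcs hsupp _) (memLp_F2 N hf hcs hsupp _)
    have hrw : ∀ x : Fin n → ℝ, ((‖f x‖ / pnorm N n x) ^ ((N:ℝ) - 1)) ^ p' =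
        (‖f x‖ / pnorm N n x) ^ (N:ℝ) := by
      intro x
      rw [← Real.rpow_mul (hbase0 x)]
      congr 1
      rw [hp'def]
      have hN1 : (N:ℝ) - 1 ≠ 0 := by linarith
      field_simp
    rw [show (fun x : Fin n → ℝ => ((‖f x‖ / pnorm N n x) ^ ((N:ℝ) - 1)) ^ p') =
        fun x => (‖f x‖ / pnorm N n x) ^ (N:ℝ) from funext hrw] at key
    exact key
  -- combine
  have hmain : A ≤ (N:ℝ) * (A ^ (1 / p') * B' ^ (1 / (N:ℝ))) := by
    calc A ≤ (N:ℝ) * (A ^ (1 / p') * B ^ (1 / (N:ℝ))) := by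
          refine le_trans hStep2 ?_
          exact mul_le_mul_of_nonneg_left hHolder (by positivity)
      _ ≤ (N:ℝ) * (A ^ (1 / p') * B' ^ (1 / (N:ℝ))) := by
          apply mul_le_mul_of_nonneg_left _ (by positivity)
          apply mul_le_mul_of_nonneg_left _ (Real.rpow_nonneg hA0 _)
          exact Real.rpow_le_rpow hB0 hBB' (by positivity)
  -- final algebra
  rcases eq_or_lt_of_le hA0 with hA | hApos
  · rw [← hA, Real.zero_rpow (by positivity : 1 / (N:ℝ) ≠ 0)]
    positivity
  · have hone : 1 / p' + 1 / (N:ℝ) = 1 := by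
      rw [one_div, one_div]
      exact hpq.inv_add_inv_eq_one
    have hsplit : A ^ (1 / p') * A ^ (1 / (N:ℝ)) = A := by
      rw [← Real.rpow_add hApos, hone, Real.rpow_one]
    have hc : 0 < A ^ (1 / p') := Real.rpow_pos_of_pos hApos _
    have h2 : A ^ (1 / p') * A ^ (1 / (N:ℝ)) ≤ A ^ (1 / p') * ((N:ℝ) * B' ^ (1 / (N:ℝ))) := by
      calc A ^ (1 / p') * A ^ (1 / (N:ℝ)) = A := hsplit
        _ ≤ (N:ℝ) * (A ^ (1 / p') * B' ^ (1 / (N:ℝ))) := hmain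
        _ = A ^ (1 / p') * ((N:ℝ) * B' ^ (1 / (N:ℝ))) := by ring
    exact le_of_mul_le_mul_left h2 hc
end

section
/- Let $a_k := ((2k-1)!!)^2$ (square of double factorial) and for $1 < m < k$ define $O(k,m) := \left( \sum_{t=1}^{k-m} 4^{k-t} a_t \sum_{t+1 \le i_1 < \cdots < i_r \le k-1} \prod_{j=1}^r o_{i_j} \right) + 4^{m-1} a_{k-m+1}$, where $r = k - m - t + 1$ and $o_i := i(i+1)$ (the Oblong numbers), with boundary values $O(k,1) := a_k$ and $O(k,k) := 4^{k-1}$. Then for all integers $k, m$ with $2 \le m \le k$, the recurrence $4k(k+1)\,O(k,m) + 4\,O(k,m-1) = O(k+1,m)$ holds. -/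
/-- `a k = ((2k-1)!!)^2`, the square of the double factorial. -/
def aSq (k : ℕ) : ℕ := (Nat.doubleFactorial (2 * k - 1)) ^ 2

/-- The Oblong numbers `o_i = i(i+1)`. -/
def obl (i : ℕ) : ℕ := i * (i + 1)

/-- The coefficients `O(k,m)`. -/
def Ocoef (k m : ℕ) : ℕ :=
  if m = 1 then aSq k
  else if m = k then 4 ^ (k - 1)
  else (∑ t ∈ Finset.Icc 1 (k - m), 4 ^ (k - t) * aSq t *
          ∑ s ∈ (Finset.Icc (t + 1) (k - 1)).powersetCard (k - m - t + 1), ∏ i ∈ s, obl i)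
        + 4 ^ (m - 1) * aSq (k - m + 1)

/-- Auxiliary: sum over subsets of `Icc a b` of size `r` of products of oblong numbers. -/
def Spow (a b r : ℕ) : ℕ := ∑ s ∈ (Finset.Icc a b).powersetCard r, ∏ i ∈ s, obl i

lemma Spow_zero (a b : ℕ) : Spow a b 0 = 1 := by simp [Spow]

lemma Spow_of_lt (a b r : ℕ) (h : (Finset.Icc a b).card < r) : Spow a b r = 0 := by
  rw [Spow, Finset.powersetCard_eq_empty.mpr h, Finset.sum_empty]

lemma Ssplit (a b r : ℕ) (h : a ≤ b + 1) :
    Spow a (b + 1) (r + 1) = Spow a b (r + 1) + obl (b + 1) * Spow a b r := by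
  have hins : Finset.Icc a (b+1) = insert (b+1) (Finset.Icc a b) := by
    ext x; simp only [Finset.mem_Icc, Finset.mem_insert]; omega
  have hnot : b + 1 ∉ Finset.Icc a b := by simp
  rw [Spow, hins, Finset.powersetCard_succ_insert hnot, Finset.sum_union, Finset.sum_image]
  · have : ∑ u ∈ (Finset.Icc a b).powersetCard r, ∏ i ∈ insert (b+1) u, obl i
        = obl (b + 1) * Spow a b r := by
      rw [Spow, Finset.mul_sum]
      refine Finset.sum_congr rfl fun u hu => ?_
      rw [Finset.prod_insert fun hb => hnot ((Finset.mem_powersetCard.mp hu).1 hb)]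
    rw [this]; rfl
  · intro u hu v hv huv
    have hu' : b + 1 ∉ u := fun hb => hnot ((Finset.mem_powersetCard.mp hu).1 hb)
    have hv' : b + 1 ∉ v := fun hb => hnot ((Finset.mem_powersetCard.mp hv).1 hb)
    rw [← Finset.erase_insert hu', ← Finset.erase_insert hv', huv]
  · rw [Finset.disjoint_right]
    rintro u hu hu'
    simp only [Finset.mem_image] at hu
    obtain ⟨v, hv, rfl⟩ := hu
    exact (fun h => h (Finset.mem_insert_self _ _))
      fun hb => hnot ((Finset.mem_powersetCard.mp hu').1 hb)

/-- Uniform formula for `Ocoef`. -/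
def F (k m : ℕ) : ℕ :=
  (∑ t ∈ Finset.Icc 1 (k - m), 4 ^ (k - t) * aSq t * Spow (t + 1) (k - 1) (k - m - t + 1))
    + 4 ^ (m - 1) * aSq (k - m + 1)

lemma aSq_one : aSq 1 = 1 := by decide

lemma Ocoef_eq (k m : ℕ) (h1 : 1 ≤ m) (h2 : m ≤ k) : Ocoef k m = F k m := by
  rcases eq_or_ne m 1 with rfl | hm1
  · rw [Ocoef, if_pos rfl, F]
    have hz : ∑ t ∈ Finset.Icc 1 (k - 1), 4 ^ (k - t) * aSq t *
        Spow (t + 1) (k - 1) (k - 1 - t + 1) = 0 := by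
      refine Finset.sum_eq_zero fun t ht => ?_
      rw [Finset.mem_Icc] at ht
      rw [Spow_of_lt]
      · ring
      · rw [Nat.card_Icc]; omega
    rw [hz, zero_add, pow_zero, one_mul]
    congr 1
    omega
  · rcases eq_or_ne m k with rfl | hmk
    · rw [Ocoef, if_neg hm1, if_pos rfl, F, Nat.sub_self]
      simp [aSq_one]
    · rw [Ocoef, if_neg hm1, if_neg hmk, F]
      rfl

lemma Fmain (p n : ℕ) :
    4 * (p + n + 2) * (p + n + 3) * F (p + n + 2) (p + 2) + 4 * F (p + n + 2) (p + 1)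
      = F (p + n + 3) (p + 2) := by
  have e1 : p + n + 2 - (p + 2) = n := by omega
  have e2 : p + n + 2 - (p + 1) = n + 1 := by omega
  have e3 : p + n + 3 - (p + 2) = n + 1 := by omega
  rw [F, F, F, e1, e2, e3]
  have eA : p + 2 - 1 = p + 1 := by omega
  have eB : p + 1 - 1 = p := by omega
  have eF : p + n + 2 - 1 = p + n + 1 := by omega
  have eG : p + n + 3 - 1 = p + n + 2 := by omega
  rw [eA, eB, eF, eG]
  -- abbreviations
  set A := ∑ t ∈ Finset.Icc 1 n, 4 ^ (p + n + 2 - t) * aSq t *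
      Spow (t + 1) (p + n + 1) (n - t + 1) with hA
  set B := ∑ t ∈ Finset.Icc 1 (n + 1), 4 ^ (p + n + 2 - t) * aSq t *
      Spow (t + 1) (p + n + 1) (n + 1 - t + 1) with hB
  -- split the RHS sum using Ssplit
  have hsplit : ∀ t ∈ Finset.Icc 1 (n + 1),
      4 ^ (p + n + 3 - t) * aSq t * Spow (t + 1) (p + n + 2) (n + 1 - t + 1)
      = 4 * (4 ^ (p + n + 2 - t) * aSq t *
            Spow (t + 1) (p + n + 1) (n + 1 - t + 1))
        + obl (p + n + 2) * (4 * (4 ^ (p + n + 2 - t) * aSq t *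
            Spow (t + 1) (p + n + 1) (n + 1 - t))) := by
    intro t ht
    rw [Finset.mem_Icc] at ht
    have h3 : p + n + 3 - t = (p + n + 2 - t) + 1 := by omega
    rw [h3, pow_succ,
      show Spow (t + 1) (p + n + 2) (n + 1 - t + 1)
          = Spow (t + 1) (p + n + 1) (n + 1 - t + 1)
            + obl (p + n + 2) * Spow (t + 1) (p + n + 1) (n + 1 - t) from
        Ssplit (t + 1) (p + n + 1) (n + 1 - t) (by omega)]
    ring
  rw [Finset.sum_congr rfl hsplit, Finset.sum_add_distrib, ← Finset.mul_sum, ← Finset.mul_sum,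
    ← Finset.mul_sum, ← hB]
  -- split off the top term t = n+1 of the obl-part sum
  have htop : ∑ t ∈ Finset.Icc 1 (n + 1), 4 ^ (p + n + 2 - t) * aSq t *
      Spow (t + 1) (p + n + 1) (n + 1 - t)
      = A + 4 ^ (p + 1) * aSq (n + 1) := by
    rw [Finset.sum_Icc_succ_top (by omega), hA]
    congr 1
    · refine Finset.sum_congr rfl fun t ht => ?_
      rw [Finset.mem_Icc] at ht
      have : n + 1 - t = n - t + 1 := by omega
      rw [this]
    · have h1 : p + n + 2 - (n + 1) = p + 1 := by omega
      rw [h1, Nat.sub_self, Spow_zero, mul_one]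
  rw [htop]
  have hobl : 4 * (p + n + 2) * (p + n + 3) = 4 * obl (p + n + 2) := by
    rw [obl]; ring
  rw [hobl]
  ring

/-- Recurrence relation for the coefficients `O(k,m)`. -/
theorem stmt9 (k m : ℕ) (hm : 2 ≤ m) (hmk : m ≤ k) :
    4 * k * (k + 1) * Ocoef k m + 4 * Ocoef k (m - 1) = Ocoef (k + 1) m := by
  obtain ⟨p, rfl⟩ : ∃ p, m = p + 2 := ⟨m - 2, by omega⟩
  obtain ⟨n, rfl⟩ : ∃ n, k = p + n + 2 := ⟨k - (p + 2), by omega⟩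
  rw [Ocoef_eq _ _ (by omega) (by omega), Ocoef_eq _ _ (by omega) (by omega),
    Ocoef_eq _ _ (by omega) (by omega)]
  have h1 : p + 2 - 1 = p + 1 := by omega
  rw [h1]
  exact Fmain p n
end

section
/- Let $1 \le N \le n$ and $k \ge 1$ an integer. For any complex-valued $f \in C_0^\infty(\mathbb{R}^n \setminus \{x'=0\})$, we have $2 \mathrm{Re} \int_{\mathbb{R}^n} \frac{k (\log|x'|)^{2k+1}}{|x'|^N} \big( (x'\cdot\nabla_N)^k f \big) \overline{ (x'\cdot\nabla_N)^{k+1} f } \, dx = -(2k^2+k) \left\| \frac{(\log|x'|)^k (x'\cdot\nabla_N)^k f}{|x'|^{N/2}} \right\|_{L^2(\mathbb{R}^n)}^2$. -/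
open MeasureTheory Finset

namespace Stmt12

variable (N n k : ℕ)

noncomputable def rho (x : Fin n → ℝ) : ℝ := ∑ j : Fin n, if (j : ℕ) < N then (x j) ^ 2 else 0

lemma pnorm_eq (x : Fin n → ℝ) : pnorm N n x = Real.sqrt (rho N n x) := rfl

lemma rho_nonneg (x : Fin n → ℝ) : 0 ≤ rho N n x := by
  apply Finset.sum_nonneg
  intro j _
  split <;> positivity

lemma proj_hasFDerivAt (j : Fin n) (x : Fin n → ℝ) :
    HasFDerivAt (fun y : Fin n → ℝ => y j)
      (ContinuousLinearMap.proj (R := ℝ) (φ := fun _ : Fin n => ℝ) j) x := by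
  exact (ContinuousLinearMap.proj (R := ℝ) (φ := fun _ : Fin n => ℝ) j).hasFDerivAt

lemma rho_contDiff : ContDiff ℝ (⊤ : ℕ∞) (rho N n) := by
  apply ContDiff.sum
  intro j _
  by_cases h : (j : ℕ) < N
  · simp only [h, if_true]
    exact (ContinuousLinearMap.proj (R := ℝ) (φ := fun _ : Fin n => ℝ) j).contDiff.pow 2
  · simp only [h, if_false]
    exact contDiff_const

noncomputable def xiv (x : Fin n → ℝ) : Fin n → ℝ := fun j => if (j : ℕ) < N then x j else 0

noncomputable def Drho (x : Fin n → ℝ) : (Fin n → ℝ) →L[ℝ] ℝ :=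
  ∑ j : Fin n, if (j : ℕ) < N then (2 * x j) • (ContinuousLinearMap.proj j) else 0

lemma hasFDerivAt_rho (x : Fin n → ℝ) : HasFDerivAt (rho N n) (Drho N n x) x := by
  apply HasFDerivAt.fun_sum
  intro j _
  by_cases h : (j : ℕ) < N
  · simp only [h, if_true]
    have := (hasDerivAt_pow 2 (x j)).comp_hasFDerivAt x (proj_hasFDerivAt n j x)
    simpa [Function.comp_def] using this
  · simp only [h, if_false]
    exact hasFDerivAt_const 0 x

lemma Drho_single (x : Fin n → ℝ) (j : Fin n) :
    Drho N n x (Pi.single j 1) = if (j : ℕ) < N then 2 * x j else 0 := by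
  rw [Drho, ContinuousLinearMap.sum_apply]
  rw [Finset.sum_eq_single j]
  · by_cases h : (j : ℕ) < N <;> simp [h]
  · intro i _ hij
    by_cases h : (i : ℕ) < N
    · simp [h, Pi.single_apply, hij.symm]
    · simp [h]
  · simp

lemma Drho_xiv (x : Fin n → ℝ) : Drho N n x (xiv N n x) = 2 * rho N n x := by
  rw [Drho, ContinuousLinearMap.sum_apply, rho, Finset.mul_sum]
  apply Finset.sum_congr rfl
  intro j _
  by_cases h : (j : ℕ) < N
  · simp only [h, if_true, ContinuousLinearMap.smul_apply, ContinuousLinearMap.proj_apply,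
      smul_eq_mul, xiv]
    ring
  · simp [h]

lemma xiv_eq_sum (x : Fin n → ℝ) :
    xiv N n x = ∑ j : Fin n, (if (j : ℕ) < N then x j else 0) • (Pi.single j (1 : ℝ) : Fin n → ℝ) := by
  funext i
  rw [Finset.sum_apply]
  rw [Finset.sum_eq_single i]
  · by_cases h : (i : ℕ) < N <;> simp [h, xiv]
  · intro j _ hij
    simp [Pi.single_apply, hij]
  · simp

lemma count_lt (hNn : N ≤ n) (c : ℝ) :
    ∑ j : Fin n, (if (j : ℕ) < N then c else 0) = N * c := by
  rw [Fin.sum_univ_eq_sum_range (fun m => if m < N then c else 0)]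
  rw [Finset.sum_ite, Finset.sum_const, Finset.sum_const_zero, add_zero]
  have : Finset.filter (fun i => i < N) (Finset.range n) = Finset.range N := by
    ext i
    simp only [Finset.mem_filter, Finset.mem_range]
    omega
  rw [this, Finset.card_range, nsmul_eq_mul]

/- ### eul lemmas -/

lemma eul_apply (g : (Fin n → ℝ) → ℂ) (x : Fin n → ℝ) :
    eul N n g x = fderiv ℝ g x (xiv N n x) := by
  rw [eul, xiv_eq_sum, map_sum]
  apply Finset.sum_congr rfl
  intro j _
  by_cases hj : (j : ℕ) < N
  · simp [hj, Complex.real_smul]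
  · simp [hj]

lemma eul_contDiff {g : (Fin n → ℝ) → ℂ} (hg : ContDiff ℝ (⊤ : ℕ∞) g) :
    ContDiff ℝ (⊤ : ℕ∞) (eul N n g) := by
  apply ContDiff.sum
  intro j _
  by_cases h : (j : ℕ) < N
  · simp only [h, if_true]
    have h1 : ContDiff ℝ (⊤ : ℕ∞) (fun x : Fin n → ℝ => ((x j : ℝ) : ℂ)) :=
      Complex.ofRealCLM.contDiff.comp
        (ContinuousLinearMap.proj (R := ℝ) (φ := fun _ : Fin n => ℝ) j).contDiff
    have h2 : ContDiff ℝ (⊤ : ℕ∞) (fun x => fderiv ℝ g x (Pi.single j 1)) := by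
      have := (hg.fderiv_right (m := (⊤ : ℕ∞)) le_rfl)
      exact (ContinuousLinearMap.apply ℝ ℂ (Pi.single j 1)).contDiff.comp this
    exact h1.mul h2
  · simp only [h, if_false]
    exact contDiff_const

lemma eul_zero_of_nmem_tsupport {g : (Fin n → ℝ) → ℂ} {x : Fin n → ℝ} (hx : x ∉ tsupport g) :
    eul N n g x = 0 := by
  have hfd : fderiv ℝ g x = 0 := by
    have hev : g =ᶠ[nhds x] (fun _ => 0) :=
      Filter.eventuallyEq_iff_exists_mem.2 ⟨(tsupport g)ᶜ,
        (isClosed_tsupport g).isOpen_compl.mem_nhds hx,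
        fun y hy => image_eq_zero_of_notMem_tsupport hy⟩
    rw [hev.fderiv_eq, fderiv_fun_const]
    rfl
  simp [eul, hfd]

lemma eul_tsupport_subset (g : (Fin n → ℝ) → ℂ) :
    tsupport (eul N n g) ⊆ tsupport g := by
  apply closure_minimal _ (isClosed_tsupport g)
  intro x hx
  by_contra hxs
  exact hx (eul_zero_of_nmem_tsupport N n hxs)

lemma iter_contDiff {f : (Fin n → ℝ) → ℂ} (hf : ContDiff ℝ (⊤ : ℕ∞) f) (m : ℕ) :
    ContDiff ℝ (⊤ : ℕ∞) ((eul N n)^[m] f) := by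
  induction m with
  | zero => simpa using hf
  | succ m ih => rw [Function.iterate_succ_apply']; exact eul_contDiff N n ih

lemma iter_tsupport {f : (Fin n → ℝ) → ℂ} (m : ℕ) :
    tsupport ((eul N n)^[m] f) ⊆ tsupport f := by
  induction m with
  | zero => simp
  | succ m ih =>
    rw [Function.iterate_succ_apply']
    exact (eul_tsupport_subset N n _).trans ih

/- ### gluing lemmas -/

lemma glue_cont {E : Type*} [NormedAddCommGroup E] {u : (Fin n → ℝ) → E} {U T : Set (Fin n → ℝ)}
    (hU : IsOpen U) (hT : IsClosed T) (hc : ContinuousOn u U) (h0 : ∀ x ∉ T, u x = 0)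
    (hcov : ∀ x, x ∈ U ∨ x ∉ T) : Continuous u := by
  rw [continuous_iff_continuousAt]
  intro x
  rcases hcov x with hx | hx
  · exact hc.continuousAt (hU.mem_nhds hx)
  · have hev : u =ᶠ[nhds x] (fun _ => 0) :=
      Filter.eventuallyEq_iff_exists_mem.2 ⟨Tᶜ, hT.isOpen_compl.mem_nhds hx, fun y hy => h0 y hy⟩
    exact ContinuousAt.congr (continuousAt_const) hev.symm

lemma glue_diff {u : (Fin n → ℝ) → ℝ} {U T : Set (Fin n → ℝ)}
    (hU : IsOpen U) (hT : IsClosed T) (hc : DifferentiableOn ℝ u U) (h0 : ∀ x ∉ T, u x = 0)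
    (hcov : ∀ x, x ∈ U ∨ x ∉ T) : Differentiable ℝ u := by
  intro x
  rcases hcov x with hx | hx
  · exact (hc x hx).differentiableAt (hU.mem_nhds hx)
  · have hev : u =ᶠ[nhds x] (fun _ => 0) :=
      Filter.eventuallyEq_iff_exists_mem.2 ⟨Tᶜ, hT.isOpen_compl.mem_nhds hx, fun y hy => h0 y hy⟩
    exact (differentiableAt_const 0).congr_of_eventuallyEq hev

lemma fderiv_zero_of_zero_off {u : (Fin n → ℝ) → ℝ} {T : Set (Fin n → ℝ)}
    (hT : IsClosed T) (h0 : ∀ x ∉ T, u x = 0) {x : Fin n → ℝ} (hx : x ∉ T) :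
    fderiv ℝ u x = 0 := by
  have hev : u =ᶠ[nhds x] (fun _ => 0) :=
    Filter.eventuallyEq_iff_exists_mem.2 ⟨Tᶜ, hT.isOpen_compl.mem_nhds hx, fun y hy => h0 y hy⟩
  rw [hev.fderiv_eq, fderiv_fun_const]
  rfl

/- ### norm-squared derivative -/

noncomputable def Dq {n : ℕ} (g : (Fin n → ℝ) → ℂ) (x : Fin n → ℝ) : (Fin n → ℝ) →L[ℝ] ℝ :=
  (2*(g x).re) • (Complex.reCLM.comp (fderiv ℝ g x))
    + (2*(g x).im) • (Complex.imCLM.comp (fderiv ℝ g x))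

lemma normsq_eq (z : ℂ) : ‖z‖^2 = z.re^2 + z.im^2 := by
  rw [Complex.sq_norm, Complex.normSq_apply]
  ring

lemma q_contDiff {n : ℕ} {g : (Fin n → ℝ) → ℂ} (hg : ContDiff ℝ (⊤ : ℕ∞) g) :
    ContDiff ℝ (⊤ : ℕ∞) (fun y => ‖g y‖^2) := by
  have : (fun y => ‖g y‖^2) = fun y => (g y).re^2 + (g y).im^2 := by
    funext y; exact normsq_eq _
  rw [this]
  exact ((Complex.reCLM.contDiff.comp hg).pow 2).add ((Complex.imCLM.contDiff.comp hg).pow 2)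

lemma q_hasFDerivAt {n : ℕ} {g : (Fin n → ℝ) → ℂ} (hg : ContDiff ℝ (⊤ : ℕ∞) g)
    (x : Fin n → ℝ) : HasFDerivAt (fun y => ‖g y‖^2) (Dq g x) x := by
  have hgd : HasFDerivAt g (fderiv ℝ g x) x :=
    (hg.differentiable (by simp) x).hasFDerivAt
  have hre : HasFDerivAt (fun y => (g y).re) (Complex.reCLM.comp (fderiv ℝ g x)) x :=
    Complex.reCLM.hasFDerivAt.comp x hgd
  have him : HasFDerivAt (fun y => (g y).im) (Complex.imCLM.comp (fderiv ℝ g x)) x :=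
    Complex.imCLM.hasFDerivAt.comp x hgd
  have h := (hre.fun_mul hre).fun_add (him.fun_mul him)
  have hfun : (fun y => ‖g y‖^2) = fun y => (g y).re * (g y).re + (g y).im * (g y).im := by
    funext y; rw [normsq_eq]; ring
  rw [hfun]
  refine h.congr_fderiv ?_
  rw [Dq]
  ext v
  simp only [ContinuousLinearMap.add_apply, ContinuousLinearMap.smul_apply,
    ContinuousLinearMap.coe_comp', Function.comp_apply, smul_eq_mul]
  ring

lemma Dq_apply {n : ℕ} (g : (Fin n → ℝ) → ℂ) (x : Fin n → ℝ) (v : Fin n → ℝ) :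
    Dq g x v = 2 * ((g x) * (starRingEnd ℂ) (fderiv ℝ g x v)).re := by
  rw [Dq]
  simp only [ContinuousLinearMap.add_apply, ContinuousLinearMap.smul_apply,
    ContinuousLinearMap.coe_comp', Function.comp_apply, smul_eq_mul,
    Complex.mul_re, Complex.conj_re, Complex.conj_im, Complex.reCLM_apply, Complex.imCLM_apply]
  ring

/- ### the weight function and vector field -/

variable (g : (Fin n → ℝ) → ℂ)

noncomputable def Wf : (Fin n → ℝ) → ℝ :=
  fun y => (k:ℝ) * (Real.log (pnorm N n y))^(2*k+1) / (pnorm N n y)^(N:ℝ) * ‖g y‖^2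

noncomputable def Vj (j : Fin n) : (Fin n → ℝ) → ℝ :=
  fun y => (if (j : ℕ) < N then y j else 0) * Wf N n k g y

noncomputable def Af : (Fin n → ℝ) → ℝ :=
  fun y => 2 * (((k:ℝ) * (Real.log (pnorm N n y))^(2*k+1) / (pnorm N n y)^(N:ℝ)) *
    ((g y) * (starRingEnd ℂ) (eul N n g y)).re)

noncomputable def Bf : (Fin n → ℝ) → ℝ :=
  fun y => (2*(k:ℝ)^2+k) * (‖((Real.log (pnorm N n y))^k : ℝ) • g y‖^2 / (pnorm N n y)^(N:ℝ))

noncomputable def DW (x : Fin n → ℝ) : (Fin n → ℝ) →L[ℝ] ℝ :=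
  (((k:ℝ) * (Real.log (pnorm N n x))^(2*k+1)) * ((pnorm N n x)^(N:ℝ))⁻¹) • Dq g x
    + (‖g x‖^2) • ((((k:ℝ) * (Real.log (pnorm N n x))^(2*k+1)) • ((-(((pnorm N n x)^(N:ℝ))^2)⁻¹) • (((N:ℝ) * (pnorm N n x)^((N:ℝ)-1)) • ((1/(2*pnorm N n x)) • Drho N n x)))
        + (((pnorm N n x)^(N:ℝ))⁻¹) • ((k:ℝ) • ((((2*k+1:ℕ):ℝ) * (Real.log (pnorm N n x))^(2*k)) • ((pnorm N n x)⁻¹ • ((1/(2*pnorm N n x)) • Drho N n x))))))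

lemma Wf_hasFDerivAt (hg : ContDiff ℝ (⊤ : ℕ∞) g) (x : Fin n → ℝ) (hx : 0 < rho N n x) :
    HasFDerivAt (Wf N n k g) (DW N n k g x) x := by
  have hrho := hasFDerivAt_rho N n x
  have hq := q_hasFDerivAt hg x
  have hr : 0 < pnorm N n x := Real.sqrt_pos.2 hx
  have hpn : HasFDerivAt (pnorm N n) ((1/(2*pnorm N n x)) • Drho N n x) x := by
    have h := (Real.hasDerivAt_sqrt hx.ne').comp_hasFDerivAt x hrho
    exact h
  have hL : HasFDerivAt (fun y => Real.log (pnorm N n y))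
      ((pnorm N n x)⁻¹ • ((1/(2*pnorm N n x)) • Drho N n x)) x :=
    (Real.hasDerivAt_log hr.ne').comp_hasFDerivAt x hpn
  have hpow : HasDerivAt (fun t : ℝ => t^(2*k+1))
      (((2*k+1 : ℕ):ℝ) * (Real.log (pnorm N n x))^(2*k)) (Real.log (pnorm N n x)) := by
    have := hasDerivAt_pow (2*k+1) (Real.log (pnorm N n x))
    simpa using this
  have hP : HasFDerivAt (fun y => (Real.log (pnorm N n y))^(2*k+1))
      ((((2*k+1:ℕ):ℝ) * (Real.log (pnorm N n x))^(2*k)) • ((pnorm N n x)⁻¹ • ((1/(2*pnorm N n x)) • Drho N n x))) x :=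
    (hpow.comp_hasFDerivAt x hL :)
  have hkP := hP.const_mul (k:ℝ)
  have hR : HasFDerivAt (fun y => (pnorm N n y)^(N:ℝ))
      (((N:ℝ) * (pnorm N n x)^((N:ℝ)-1)) • ((1/(2*pnorm N n x)) • Drho N n x)) x :=
    (Real.hasDerivAt_rpow_const (Or.inl hr.ne')).comp_hasFDerivAt x hpn
  have hRne : (pnorm N n x)^(N:ℝ) ≠ 0 := (Real.rpow_pos_of_pos hr _).ne'
  have hInv : HasFDerivAt (fun y => ((pnorm N n y)^(N:ℝ))⁻¹)
      ((-(((pnorm N n x)^(N:ℝ))^2)⁻¹) • (((N:ℝ) * (pnorm N n x)^((N:ℝ)-1)) • ((1/(2*pnorm N n x)) • Drho N n x))) x :=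
    (hasDerivAt_inv hRne).comp_hasFDerivAt x hR
  have h1 := hkP.mul hInv
  have h2 := h1.mul hq
  have hfun : Wf N n k g = fun y =>
      ((fun y => (k:ℝ) * (Real.log (pnorm N n y))^(2*k+1)) y * (fun y => ((pnorm N n y)^(N:ℝ))⁻¹) y) * ‖g y‖^2 := by
    funext y
    rw [Wf, div_eq_mul_inv]
  rw [hfun, DW]
  exact h2

lemma divergence_eq (hN1 : 1 ≤ N) (hNn : N ≤ n) (hg : ContDiff ℝ (⊤ : ℕ∞) g)
    (x : Fin n → ℝ) (hx : 0 < rho N n x) :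
    ∑ j : Fin n, fderiv ℝ (Vj N n k g j) x (Pi.single j 1)
      = Af N n k g x + Bf N n k g x := by
  have hr : 0 < pnorm N n x := Real.sqrt_pos.2 hx
  have hrr : rho N n x = (pnorm N n x)^2 := (Real.sq_sqrt hx.le).symm
  have hWd := Wf_hasFDerivAt N n k g hg x hx
  have hVjd : ∀ j : Fin n, fderiv ℝ (Vj N n k g j) x (Pi.single j 1)
      = (if (j : ℕ) < N then x j else 0) * (DW N n k g x (Pi.single j 1))
        + (if (j : ℕ) < N then Wf N n k g x else 0) := by
    intro j
    by_cases hj : (j : ℕ) < N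
    · have hmj : HasFDerivAt (fun y : Fin n → ℝ => if (j : ℕ) < N then y j else 0)
          (ContinuousLinearMap.proj (R := ℝ) (φ := fun _ : Fin n => ℝ) j) x := by
        simp only [if_pos hj]
        exact proj_hasFDerivAt n j x
      have h2 : HasFDerivAt (Vj N n k g j)
          ((if (j : ℕ) < N then x j else 0) • DW N n k g x
            + Wf N n k g x • ContinuousLinearMap.proj (R := ℝ) (φ := fun _ : Fin n => ℝ) j) x :=
        hmj.mul hWd
      rw [h2.fderiv]
      simp [hj]
    · have hmj : HasFDerivAt (fun y : Fin n → ℝ => if (j : ℕ) < N then y j else 0)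
          (0 : (Fin n → ℝ) →L[ℝ] ℝ) x := by
        simp only [if_neg hj]
        exact hasFDerivAt_const 0 x
      have h2 : HasFDerivAt (Vj N n k g j)
          ((if (j : ℕ) < N then x j else 0) • DW N n k g x + Wf N n k g x • 0) x :=
        hmj.mul hWd
      rw [h2.fderiv]
      simp [hj]
  rw [Finset.sum_congr rfl (fun j _ => hVjd j), Finset.sum_add_distrib]
  have h1 : ∑ j : Fin n, (if (j : ℕ) < N then x j else 0) * (DW N n k g x (Pi.single j 1))
      = DW N n k g x (xiv N n x) := by
    rw [xiv_eq_sum, map_sum]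
    apply Finset.sum_congr rfl
    intro j _
    rw [ContinuousLinearMap.map_smul, smul_eq_mul]
  rw [h1, count_lt N n hNn]
  have hRpos : 0 < (pnorm N n x)^(N:ℝ) := Real.rpow_pos_of_pos hr _
  have hsub : (pnorm N n x)^((N:ℝ)-1) = (pnorm N n x)^(N:ℝ)/(pnorm N n x) := by
    rw [Real.rpow_sub hr, Real.rpow_one]
  have hnorm : ‖((Real.log (pnorm N n x))^k : ℝ) • g x‖^2
      = (Real.log (pnorm N n x))^(2*k) * ‖g x‖^2 := by
    rw [norm_smul, mul_pow, Real.norm_eq_abs, sq_abs, ← pow_mul, Nat.mul_comm]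
  simp only [DW, Af, Bf, Wf, ContinuousLinearMap.add_apply, ContinuousLinearMap.smul_apply,
    smul_eq_mul, Drho_xiv, Dq_apply, eul_apply, hnorm, hsub, hrr]
  push_cast
  field_simp
  ring

/- ### continuity and integrability -/

lemma U_open : IsOpen {x : Fin n → ℝ | 0 < rho N n x} :=
  isOpen_lt continuous_const (rho_contDiff N n).continuous

lemma pnorm_continuous : Continuous (pnorm N n) :=
  Real.continuous_sqrt.comp (rho_contDiff N n).continuous

lemma rho_pos_of_pnorm_ne {x : Fin n → ℝ} (h : pnorm N n x ≠ 0) : 0 < rho N n x := by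
  rcases (rho_nonneg N n x).lt_or_eq with h1 | h1
  · exact h1
  · exact absurd (by rw [pnorm_eq, ← h1, Real.sqrt_zero]) h

lemma pnorm_pos_of_rho {x : Fin n → ℝ} (h : 0 < rho N n x) : 0 < pnorm N n x :=
  Real.sqrt_pos.2 h

section TU

variable {T : Set (Fin n → ℝ)}

lemma g_zero_off (hgT : tsupport g ⊆ T) : ∀ x ∉ T, g x = 0 := fun x hx =>
  image_eq_zero_of_notMem_tsupport (fun hmem => hx (hgT hmem))

lemma cover (hTU : ∀ x ∈ T, 0 < rho N n x) :
    ∀ x : Fin n → ℝ, x ∈ {x : Fin n → ℝ | 0 < rho N n x} ∨ x ∉ T := by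
  intro x
  by_cases hx : x ∈ T
  · exact Or.inl (hTU x hx)
  · exact Or.inr hx

lemma Vj_contDiffOn (hg : ContDiff ℝ (⊤ : ℕ∞) g) (j : Fin n) :
    ContDiffOn ℝ (⊤ : ℕ∞) (Vj N n k g j) {x : Fin n → ℝ | 0 < rho N n x} := by
  intro x hx
  have hx' : (0:ℝ) < rho N n x := hx
  have hr : 0 < pnorm N n x := pnorm_pos_of_rho N n hx'
  have hpn : ContDiffAt ℝ (⊤ : ℕ∞) (pnorm N n) x := by
    have := ((rho_contDiff N n).contDiffAt (x := x)).sqrt hx'.ne'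
    exact this
  have hL : ContDiffAt ℝ (⊤ : ℕ∞) (fun y => Real.log (pnorm N n y)) x := hpn.log hr.ne'
  have hnum : ContDiffAt ℝ (⊤ : ℕ∞) (fun y => (k:ℝ) * (Real.log (pnorm N n y))^(2*k+1)) x :=
    contDiffAt_const.mul (hL.pow (2*k+1))
  have hR : ContDiffAt ℝ (⊤ : ℕ∞) (fun y => (pnorm N n y)^(N:ℝ)) x :=
    hpn.rpow_const_of_ne hr.ne'
  have hw : ContDiffAt ℝ (⊤ : ℕ∞)
      (fun y => (k:ℝ) * (Real.log (pnorm N n y))^(2*k+1) / (pnorm N n y)^(N:ℝ)) x :=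
    hnum.div hR (Real.rpow_pos_of_pos hr _).ne'
  have hq : ContDiffAt ℝ (⊤ : ℕ∞) (fun y => ‖g y‖^2) x := (q_contDiff hg).contDiffAt
  have hWf : ContDiffAt ℝ (⊤ : ℕ∞) (Wf N n k g) x := hw.mul hq
  have hmj : ContDiffAt ℝ (⊤ : ℕ∞) (fun y : Fin n → ℝ => if (j : ℕ) < N then y j else 0) x := by
    by_cases hj : (j : ℕ) < N
    · simp only [if_pos hj]
      exact ((ContinuousLinearMap.proj (R := ℝ) (φ := fun _ : Fin n => ℝ) j).contDiff).contDiffAt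
    · simp only [if_neg hj]
      exact contDiffAt_const
  exact (hmj.mul hWf).contDiffWithinAt

lemma Wf_zero_off (hgT : tsupport g ⊆ T) : ∀ x ∉ T, Wf N n k g x = 0 := by
  intro x hx
  rw [Wf, g_zero_off n g hgT x hx]
  simp

lemma Vj_zero_off (hgT : tsupport g ⊆ T) (j : Fin n) : ∀ x ∉ T, Vj N n k g j x = 0 := by
  intro x hx
  rw [Vj, Wf_zero_off N n k g hgT x hx, mul_zero]

lemma Vj_cont (hT : IsClosed T) (hgT : tsupport g ⊆ T) (hTU : ∀ x ∈ T, 0 < rho N n x)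
    (hg : ContDiff ℝ (⊤ : ℕ∞) g) (j : Fin n) : Continuous (Vj N n k g j) :=
  glue_cont n (U_open N n) hT ((Vj_contDiffOn N n k g hg j).continuousOn)
    (Vj_zero_off N n k g hgT j) (cover N n hTU)

lemma Vj_diff (hT : IsClosed T) (hgT : tsupport g ⊆ T) (hTU : ∀ x ∈ T, 0 < rho N n x)
    (hg : ContDiff ℝ (⊤ : ℕ∞) g) (j : Fin n) : Differentiable ℝ (Vj N n k g j) :=
  glue_diff n (U_open N n) hT
    ((Vj_contDiffOn N n k g hg j).differentiableOn (by simp))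
    (Vj_zero_off N n k g hgT j) (cover N n hTU)

lemma Fj_zero_off (hT : IsClosed T) (hgT : tsupport g ⊆ T) (j : Fin n) :
    ∀ x ∉ T, fderiv ℝ (Vj N n k g j) x (Pi.single j 1) = 0 := by
  intro x hx
  rw [fderiv_zero_of_zero_off n hT (Vj_zero_off N n k g hgT j) hx]
  rfl

lemma Fj_cont (hT : IsClosed T) (hgT : tsupport g ⊆ T) (hTU : ∀ x ∈ T, 0 < rho N n x)
    (hg : ContDiff ℝ (⊤ : ℕ∞) g) (j : Fin n) :
    Continuous (fun x => fderiv ℝ (Vj N n k g j) x (Pi.single j 1)) := by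
  apply glue_cont n (U_open N n) hT _ (Fj_zero_off N n k g hT hgT j) (cover N n hTU)
  have hfd : ContinuousOn (fderiv ℝ (Vj N n k g j)) {x : Fin n → ℝ | 0 < rho N n x} :=
    (Vj_contDiffOn N n k g hg j).continuousOn_fderiv_of_isOpen (U_open N n)
      (by exact_mod_cast le_top)
  exact hfd.clm_apply continuousOn_const

lemma Af_zero_off (hgT : tsupport g ⊆ T) : ∀ x ∉ T, Af N n k g x = 0 := by
  intro x hx
  rw [Af, g_zero_off n g hgT x hx]
  simp

lemma Bf_zero_off (hgT : tsupport g ⊆ T) : ∀ x ∉ T, Bf N n k g x = 0 := by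
  intro x hx
  rw [Bf, g_zero_off n g hgT x hx]
  simp

lemma Af_cont (hT : IsClosed T) (hgT : tsupport g ⊆ T) (hTU : ∀ x ∈ T, 0 < rho N n x)
    (hg : ContDiff ℝ (⊤ : ℕ∞) g) : Continuous (Af N n k g) := by
  apply glue_cont n (U_open N n) hT _ (Af_zero_off N n k g hgT) (cover N n hTU)
  have hpn : ContinuousOn (pnorm N n) {x : Fin n → ℝ | 0 < rho N n x} :=
    (pnorm_continuous N n).continuousOn
  have hL : ContinuousOn (fun y => Real.log (pnorm N n y)) {x : Fin n → ℝ | 0 < rho N n x} :=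
    hpn.log (fun x hx => (pnorm_pos_of_rho N n hx).ne')
  have hnum : ContinuousOn (fun y => (k:ℝ) * (Real.log (pnorm N n y))^(2*k+1))
      {x : Fin n → ℝ | 0 < rho N n x} := continuousOn_const.mul (hL.pow _)
  have hRc : ContinuousOn (fun y => (pnorm N n y)^(N:ℝ)) {x : Fin n → ℝ | 0 < rho N n x} :=
    hpn.rpow_const (fun x hx => Or.inl (pnorm_pos_of_rho N n hx).ne')
  have hw : ContinuousOn
      (fun y => (k:ℝ) * (Real.log (pnorm N n y))^(2*k+1) / (pnorm N n y)^(N:ℝ))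
      {x : Fin n → ℝ | 0 < rho N n x} :=
    hnum.div hRc (fun x hx => (Real.rpow_pos_of_pos (pnorm_pos_of_rho N n hx) _).ne')
  have hrest : Continuous (fun y => ((g y) * (starRingEnd ℂ) (eul N n g y)).re) :=
    Complex.continuous_re.comp
      ((hg.continuous.mul (continuous_star.comp (eul_contDiff N n hg).continuous)))
  exact continuousOn_const.mul (hw.mul hrest.continuousOn)

lemma Bf_cont (hT : IsClosed T) (hgT : tsupport g ⊆ T) (hTU : ∀ x ∈ T, 0 < rho N n x)
    (hg : ContDiff ℝ (⊤ : ℕ∞) g) : Continuous (Bf N n k g) := by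
  apply glue_cont n (U_open N n) hT _ (Bf_zero_off N n k g hgT) (cover N n hTU)
  have hpn : ContinuousOn (pnorm N n) {x : Fin n → ℝ | 0 < rho N n x} :=
    (pnorm_continuous N n).continuousOn
  have hL : ContinuousOn (fun y => Real.log (pnorm N n y)) {x : Fin n → ℝ | 0 < rho N n x} :=
    hpn.log (fun x hx => (pnorm_pos_of_rho N n hx).ne')
  have hnum : ContinuousOn (fun y => ‖((Real.log (pnorm N n y))^k : ℝ) • g y‖^2)
      {x : Fin n → ℝ | 0 < rho N n x} :=
    (((hL.pow k).smul hg.continuous.continuousOn).norm).pow 2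
  have hRc : ContinuousOn (fun y => (pnorm N n y)^(N:ℝ)) {x : Fin n → ℝ | 0 < rho N n x} :=
    hpn.rpow_const (fun x hx => Or.inl (pnorm_pos_of_rho N n hx).ne')
  exact continuousOn_const.mul
    (hnum.div hRc (fun x hx => (Real.rpow_pos_of_pos (pnorm_pos_of_rho N n hx) _).ne'))

lemma ibp (hT : IsClosed T) (hTc : IsCompact T) (hgT : tsupport g ⊆ T)
    (hTU : ∀ x ∈ T, 0 < rho N n x) (hg : ContDiff ℝ (⊤ : ℕ∞) g) (j : Fin n) :
    ∫ x : Fin n → ℝ, fderiv ℝ (Vj N n k g j) x (Pi.single j 1) = 0 := by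
  have iV : Integrable (Vj N n k g j) volume :=
    (Vj_cont N n k g hT hgT hTU hg j).integrable_of_hasCompactSupport
      (HasCompactSupport.intro hTc (Vj_zero_off N n k g hgT j))
  have iF : Integrable (fun x => fderiv ℝ (Vj N n k g j) x (Pi.single j 1)) volume :=
    (Fj_cont N n k g hT hgT hTU hg j).integrable_of_hasCompactSupport
      (HasCompactSupport.intro hTc (Fj_zero_off N n k g hT hgT j))
  have h1 : Integrable (fun x : Fin n → ℝ =>
      (fderiv ℝ (fun _ : Fin n → ℝ => (1:ℝ)) x) (Pi.single j 1) * Vj N n k g j x) volume := by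
    simp only [fderiv_fun_const, Pi.zero_apply, ContinuousLinearMap.zero_apply, zero_mul]
    exact integrable_zero _ _ _
  have h2 : Integrable (fun x : Fin n → ℝ =>
      (1:ℝ) * (fderiv ℝ (Vj N n k g j) x) (Pi.single j 1)) volume := by simpa using iF
  have h3 : Integrable (fun x : Fin n → ℝ => (1:ℝ) * Vj N n k g j x) volume := by simpa using iV
  have key := integral_mul_fderiv_eq_neg_fderiv_mul_of_integrable (μ := volume)
    (f := fun _ : Fin n → ℝ => (1:ℝ)) (g := Vj N n k g j) (v := Pi.single j 1)
    h1 h2 h3 (fun x _ => differentiableAt_const (1:ℝ)) (fun x _ => Vj_diff N n k g hT hgT hTU hg j x)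
  simpa [fderiv_fun_const] using key

lemma integral_Af_eq (hN1 : 1 ≤ N) (hNn : N ≤ n) (hT : IsClosed T) (hTc : IsCompact T)
    (hgT : tsupport g ⊆ T) (hTU : ∀ x ∈ T, 0 < rho N n x) (hg : ContDiff ℝ (⊤ : ℕ∞) g) :
    ∫ x : Fin n → ℝ, Af N n k g x = - ∫ x : Fin n → ℝ, Bf N n k g x := by
  have iA : Integrable (Af N n k g) volume :=
    (Af_cont N n k g hT hgT hTU hg).integrable_of_hasCompactSupport
      (HasCompactSupport.intro hTc (Af_zero_off N n k g hgT))
  have iB : Integrable (Bf N n k g) volume :=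
    (Bf_cont N n k g hT hgT hTU hg).integrable_of_hasCompactSupport
      (HasCompactSupport.intro hTc (Bf_zero_off N n k g hgT))
  have iF : ∀ j : Fin n, Integrable (fun x => fderiv ℝ (Vj N n k g j) x (Pi.single j 1)) volume :=
    fun j => (Fj_cont N n k g hT hgT hTU hg j).integrable_of_hasCompactSupport
      (HasCompactSupport.intro hTc (Fj_zero_off N n k g hT hgT j))
  have hsum : ∫ x : Fin n → ℝ, (∑ j : Fin n, fderiv ℝ (Vj N n k g j) x (Pi.single j 1)) = 0 := by
    rw [integral_finset_sum Finset.univ (fun j _ => iF j)]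
    exact Finset.sum_eq_zero (fun j _ => ibp N n k g hT hTc hgT hTU hg j)
  have hptw : ∀ x : Fin n → ℝ,
      (∑ j : Fin n, fderiv ℝ (Vj N n k g j) x (Pi.single j 1)) = Af N n k g x + Bf N n k g x := by
    intro x
    by_cases hx : 0 < rho N n x
    · exact divergence_eq N n k g hN1 hNn hg x hx
    · have hxT : x ∉ T := fun hmem => hx (hTU x hmem)
      rw [Af_zero_off N n k g hgT x hxT, Bf_zero_off N n k g hgT x hxT, add_zero]
      exact Finset.sum_eq_zero (fun j _ => Fj_zero_off N n k g hT hgT j x hxT)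
  have h0 : ∫ x : Fin n → ℝ, (Af N n k g x + Bf N n k g x) = 0 := by
    rw [show (fun x => Af N n k g x + Bf N n k g x)
        = (fun x => ∑ j : Fin n, fderiv ℝ (Vj N n k g j) x (Pi.single j 1))
      from funext fun x => (hptw x).symm]
    exact hsum
  rw [integral_add iA iB] at h0
  linarith

end TU

end Stmt12

/-- Cross term integral identity for the higher-order $L^2$ estimates. -/
theorem stmt12 (n N k : ℕ) (hN1 : 1 ≤ N) (hNn : N ≤ n) (hk : 1 ≤ k)
    (f : (Fin n → ℝ) → ℂ) (hf : ContDiff ℝ (⊤ : ℕ∞) f) (hcs : HasCompactSupport f)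
    (hsupp : tsupport f ⊆ {x | pnorm N n x ≠ 0}) :
    2 * ∫ x : Fin n → ℝ,
        ((k : ℝ) * (Real.log (pnorm N n x)) ^ (2 * k + 1) / (pnorm N n x) ^ (N : ℝ)) *
          (((eul N n)^[k] f x) * (starRingEnd ℂ) ((eul N n)^[k + 1] f x)).re =
      -(2 * (k : ℝ) ^ 2 + k) * ∫ x : Fin n → ℝ,
        ‖((Real.log (pnorm N n x)) ^ k : ℝ) • ((eul N n)^[k] f x)‖ ^ 2 /
          (pnorm N n x) ^ (N : ℝ) := by
  classical
  have hf' : ContDiff ℝ (⊤ : ℕ∞) f := hf.of_le (by simp)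
  set g := (eul N n)^[k] f with hgdef
  have hg : ContDiff ℝ (⊤ : ℕ∞) g := Stmt12.iter_contDiff N n hf' k
  have hgT : tsupport g ⊆ tsupport f := Stmt12.iter_tsupport N n k
  have hT : IsClosed (tsupport f) := isClosed_tsupport f
  have hTc : IsCompact (tsupport f) := hcs
  have hTU : ∀ x ∈ tsupport f, 0 < Stmt12.rho N n x :=
    fun x hx => Stmt12.rho_pos_of_pnorm_ne N n (hsupp hx)
  have key := Stmt12.integral_Af_eq N n k g hN1 hNn hT hTc hgT hTU hg
  have hit : (eul N n)^[k + 1] f = eul N n g := Function.iterate_succ_apply' (eul N n) k f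
  rw [hit]
  have hA : ∫ x : Fin n → ℝ, Stmt12.Af N n k g x
      = 2 * ∫ x : Fin n → ℝ,
          ((k : ℝ) * (Real.log (pnorm N n x)) ^ (2 * k + 1) / (pnorm N n x) ^ (N : ℝ)) *
            ((g x) * (starRingEnd ℂ) (eul N n g x)).re := by
    rw [← smul_eq_mul, ← integral_smul]
    simp only [smul_eq_mul]
    rfl
  have hB : ∫ x : Fin n → ℝ, Stmt12.Bf N n k g x
      = (2 * (k : ℝ) ^ 2 + k) * ∫ x : Fin n → ℝ,
          ‖((Real.log (pnorm N n x)) ^ k : ℝ) • g x‖ ^ 2 / (pnorm N n x) ^ (N : ℝ) := by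
    rw [← smul_eq_mul, ← integral_smul]
    simp only [smul_eq_mul]
    rfl
  rw [hA, hB] at key
  rw [key]
  ring
end
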